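/- arXiv:2202.10523 — 7 statements merged into one kernel-verified Lean document; each statement's English description precedes it below -/
import Mathlib

section
/- Theorem 2 (linear convergence of SSI-HG under the strong MVI assumption). Suppose (w*, δ*) is a solution of the strong MVI with parameter μ > 0, and let σ, τ > 0 satisfy max{L12·(στn)^{1/2}, L11·σ} ≤ 1/3 and θ = max{ 1/(1 + μσ), (1 + (n−1)μτ/n)/(1 + μτ) }. Let (w^k, δ^k) be an SSI-HG trajectory with these parameters. Then there is a constant C ≥ 0, independent of K, such that for every K ≥ 1: n^{−(K−1)} ∑_{s ∈ {1,…,n}^{K−1}} ‖w* − w^K(s)‖² ≤ C·θ^K and n^{−K} ∑_{s ∈ {1,…,n}^K} ‖δ* − δ^K(s)‖² ≤ C·θ^K. -/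
open scoped RealInnerProductSpace

def IsSubgradient {X : Type*} [NormedAddCommGroup X] [InnerProductSpace ℝ X]
    (h : X → ℝ) (x γ : X) : Prop :=
  ∀ u, h u ≥ h x + ⟪γ, u - x⟫

/-- Given the initial point `w0` and the family `W` (where `W s` is the iterate
`w^{|s|+1}` produced after the (reversed) index history `s`), `wat w0 W s` is the iterate
`w^{|s|}` at the beginning of the step with (reversed) history `s`; it depends only on
the indices drawn strictly before the last one.  In particular `wat w0 W [] = w0 = w^0`,
which also encodes the convention `w^{-1} = w^0` via `List.tail [] = []`. -/
def wat {n : ℕ} {E : Type*} (w0 : E) (W : List (Fin n) → E) : List (Fin n) → E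
  | [] => w0
  | _ :: t => W t

/-!
The proof is a Lyapunov argument. For an index history `t` the potential `SSIHG.lyapunov t`
combines the weighted squared distances of `(w_t, δ_t)` to `(w*, δ*)`, the squared lengths of
the last primal and dual steps, and the inner product of the extrapolation term with `w_t - w*`.
The strong MVI, applied at the new primal iterate and at the dual iterate in which every block
is updated (with the subgradients given by the optimality conditions of the proximal steps),
together with the unbiasedness of the extrapolation over the next index, shows that the
average of the potential over the next index is at most `θ` times its current value; the
step-size condition lets Young's inequality absorb the Lipschitz error terms. The same condition
makes the potential dominate `‖w_t - w*‖² / (6σ) + n ‖δ_t - δ*‖² / (2τ)`, so averaging over all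
histories gives the linear rate.
-/

lemma real_inner_sub_sub_eq {X : Type*} [NormedAddCommGroup X] [InnerProductSpace ℝ X]
    (x y z : X) : ⟪x - y, x - z⟫ = (‖x - y‖ ^ 2 + ‖x - z‖ ^ 2 - ‖y - z‖ ^ 2) / 2 := by
  rw [show y - z = (x - z) - (x - y) by abel, norm_sub_sq_real (x - z), real_inner_comm]
  ring

lemma mul_le_of_sq_stepsize {n σ τ L11 L12 P Q x : ℝ} (hn : 0 ≤ n) (hσ : 0 < σ) (hτ : 0 < τ)
    (h11 : σ ^ 2 * L11 ^ 2 ≤ 1 / 9) (h12 : σ * τ * n * L12 ^ 2 ≤ 1 / 9) :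
    (L11 * P + n * L12 * Q) * x ≤
      1 / (3 * σ) * x ^ 2 + 1 / (8 * σ) * P ^ 2 + n / (2 * τ) * Q ^ 2 := by
  have hP : L11 * P * x ≤ 2 * σ * L11 ^ 2 * x ^ 2 + 1 / (8 * σ) * P ^ 2 := by
    have : 2 * σ * L11 ^ 2 * x ^ 2 + 1 / (8 * σ) * P ^ 2 - L11 * P * x
        = (4 * σ * L11 * x - P) ^ 2 / (8 * σ) := by field_simp; ring
    linarith [(by positivity : 0 ≤ (4 * σ * L11 * x - P) ^ 2 / (8 * σ))]
  have hQ : n * L12 * Q * x ≤ τ * n * L12 ^ 2 * x ^ 2 / 2 + n / (2 * τ) * Q ^ 2 := by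
    have : τ * n * L12 ^ 2 * x ^ 2 / 2 + n / (2 * τ) * Q ^ 2 - n * L12 * Q * x
        = n * (τ * L12 * x - Q) ^ 2 / (2 * τ) := by field_simp; ring
    linarith [(by positivity : 0 ≤ n * (τ * L12 * x - Q) ^ 2 / (2 * τ))]
  have hx : 2 * σ * L11 ^ 2 * x ^ 2 + τ * n * L12 ^ 2 * x ^ 2 / 2 ≤ 1 / (3 * σ) * x ^ 2 := by
    rw [div_mul_eq_mul_div, le_div_iff₀ (by positivity)]
    nlinarith [mul_le_mul_of_nonneg_right h11 (sq_nonneg x),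
      mul_le_mul_of_nonneg_right h12 (sq_nonneg x)]
  linarith

lemma sq_le_of_stepsize {n σ τ L11 L12 : ℝ} (hn : 0 ≤ n) (hσ : 0 < σ) (hτ : 0 < τ)
    (hL11 : 0 ≤ L11) (hL12 : 0 ≤ L12) (hstep : max (L12 * √(σ * τ * n)) (L11 * σ) ≤ 1 / 3) :
    σ ^ 2 * L11 ^ 2 ≤ 1 / 9 ∧ σ * τ * n * L12 ^ 2 ≤ 1 / 9 := by
  obtain ⟨h12, h11⟩ := max_le_iff.1 hstep
  constructor
  · nlinarith [mul_nonneg hL11 hσ.le]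
  · have := pow_le_pow_left₀ (by positivity) h12 2
    rw [mul_pow, Real.sq_sqrt (by positivity), mul_comm] at this
    linarith

/-- The scalar core of one step of `SSIHG.lyapunov`: `a, a'` are the distances of the primal
iterate to `w*` before and after the step, `b, b'` the dual ones (after the joint update),
`p, q'` the lengths of the new primal and joint dual steps, `P, Q` those of the previous steps,
`m + ip` the inner product of the extrapolation term with the new `w - w*`, split at the old
iterate, and `A` the inner product of the gradient change with it. -/
lemma lyapunov_step_real {n θ μ σ τ a a' b b' p q' P Q m ip A : ℝ} (hn : 0 < n) (hμ : 0 ≤ μ)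
    (hσ : 0 < σ) (hτ : 0 < τ) (hθσ : 1 / (1 + μ * σ) ≤ θ)
    (hθτ : (1 + (n - 1) * μ * τ / n) / (1 + μ * τ) ≤ θ) (hθ1 : θ ≤ 1)
    (hmvi : μ / 2 * (a' ^ 2 + b' ^ 2) ≤
      A - θ * ip - θ * m - σ⁻¹ * ((p ^ 2 + a' ^ 2 - a ^ 2) / 2)
        - τ⁻¹ * ((q' ^ 2 + b' ^ 2 - b ^ 2) / 2))
    (hip : -ip ≤ 1 / (3 * σ) * p ^ 2 + 1 / (8 * σ) * P ^ 2 + n / (2 * τ) * Q ^ 2) :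
    n * (1 / (2 * σ) + μ / 2) * a' ^ 2 + (n / (2 * τ) + n * μ / 2) * ((n - 1) * b ^ 2 + b' ^ 2)
        + n * (1 / (8 * σ)) * p ^ 2 + n / (2 * τ) * q' ^ 2 - n * A
      ≤ n * θ * ((1 / (2 * σ) + μ / 2) * a ^ 2 + (n / (2 * τ) + n * μ / 2) * b ^ 2
        + 1 / (8 * σ) * P ^ 2 + n / (2 * τ) * Q ^ 2 - m) := by
  have hθ0 : 0 ≤ θ := (by positivity : (0 : ℝ) ≤ 1 / (1 + μ * σ)).trans hθσ
  rw [div_le_iff₀ (by positivity)] at hθσ hθτ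
  -- the coefficients of `a ^ 2` and `b ^ 2` that survive the telescoping contract by `θ`
  have ha : a ^ 2 / (2 * σ) ≤ θ * (1 / (2 * σ) + μ / 2) * a ^ 2 := by
    calc a ^ 2 / (2 * σ) = a ^ 2 / (2 * σ) * 1 := (mul_one _).symm
      _ ≤ a ^ 2 / (2 * σ) * (θ * (1 + μ * σ)) := by gcongr
      _ = θ * (1 / (2 * σ) + μ / 2) * a ^ 2 := by field_simp
  have hb : (n / (2 * τ) + (n - 1) * μ / 2) * b ^ 2 ≤ θ * (n / (2 * τ) + n * μ / 2) * b ^ 2 := by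
    calc (n / (2 * τ) + (n - 1) * μ / 2) * b ^ 2
        = n * b ^ 2 / (2 * τ) * (1 + (n - 1) * μ * τ / n) := by field_simp
      _ ≤ n * b ^ 2 / (2 * τ) * (θ * (1 + μ * τ)) := by gcongr
      _ = θ * (n / (2 * τ) + n * μ / 2) * b ^ 2 := by field_simp
  have hp : θ * (1 / (3 * σ) * p ^ 2) ≤ 3 / (8 * σ) * p ^ 2 := by
    calc θ * (1 / (3 * σ) * p ^ 2) ≤ 1 / (3 * σ) * p ^ 2 :=
          mul_le_of_le_one_left (by positivity) hθ1
      _ ≤ 3 / (8 * σ) * p ^ 2 := by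
          gcongr ?_ * _
          rw [div_le_div_iff₀ (by positivity) (by positivity)]
          linarith
  have hip' := mul_le_mul_of_nonneg_left hip hθ0
  have hsum := mul_le_mul_of_nonneg_left (add_le_add (add_le_add (add_le_add ha hb) hp) hip')
    hn.le
  have hmvin := mul_le_mul_of_nonneg_left hmvi hn.le
  ring_nf at hsum hmvin ⊢
  linarith

lemma max_contraction_le_one {n μ σ τ : ℝ} (hn : 0 < n) (hμ : 0 ≤ μ) (hσ : 0 ≤ σ)
    (hτ : 0 ≤ τ) : max (1 / (1 + μ * σ)) ((1 + (n - 1) * μ * τ / n) / (1 + μ * τ)) ≤ 1 := by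
  refine max_le (div_le_one_of_le₀ (by nlinarith) (by positivity))
    (div_le_one_of_le₀ ?_ (by positivity))
  have : (n - 1) * μ * τ / n ≤ μ * τ := by
    rw [div_le_iff₀ hn]
    nlinarith [mul_nonneg hμ hτ]
  linarith

section BlockUpdate

variable {ι : Type*} [Fintype ι] [DecidableEq ι] {β : ι → Type*}

lemma sum_sum_of_eq_off_diag {M : Type*} [AddCommMonoid M] (x : ∀ j, β j) (y : ι → ∀ j, β j)
    (hy : ∀ i j, j ≠ i → y i j = x j) (u : ∀ j, β j → M) :
    ∑ i, ∑ j, u j (y i j) = ∑ j, ((Fintype.card ι - 1) • u j (x j) + u j (y j j)) := by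
  rw [Finset.sum_comm]
  refine Finset.sum_congr rfl fun j _ => ?_
  rw [← Finset.sum_erase_add _ _ (Finset.mem_univ j),
    Finset.sum_congr rfl fun i hi => by rw [hy i j (Finset.ne_of_mem_erase hi).symm],
    Finset.sum_const, Finset.card_erase_of_mem (Finset.mem_univ j), Finset.card_univ]

lemma sum_separable_of_eq_off_diag [∀ j, NormedAddCommGroup (β j)] [Nonempty ι]
    {M : Type*} [AddCommGroup M] [Module ℝ M] (G : PiLp 2 β → M) (g : ∀ j, β j → M)
    (hG : ∀ δ, G δ = ∑ j, g j (δ j)) (x : PiLp 2 β) (y : ι → PiLp 2 β)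
    (hy : ∀ i j, j ≠ i → y i j = x j) :
    ∑ i, G (y i) = ((Fintype.card ι : ℝ) - 1) • G x + G (WithLp.toLp 2 fun j => y j j) := by
  simp only [hG]
  rw [sum_sum_of_eq_off_diag (β := β) x (fun i => y i) hy, Finset.sum_add_distrib,
    ← Finset.smul_sum, ← Nat.cast_smul_eq_nsmul ℝ, Nat.cast_sub Fintype.card_pos, Nat.cast_one]

end BlockUpdate

section Averaging

variable {ι : Type*} [Fintype ι]

lemma sum_ofFn_succ {M : Type*} [AddCommMonoid M] (k : ℕ) (g : List ι → M) :
    ∑ s : Fin (k + 1) → ι, g (List.ofFn s) = ∑ t : Fin k → ι, ∑ i, g (i :: List.ofFn t) := by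
  calc ∑ s : Fin (k + 1) → ι, g (List.ofFn s)
      = ∑ p : ι × (Fin k → ι), g (p.1 :: List.ofFn p.2) :=
        Fintype.sum_equiv (Fin.consEquiv fun _ => ι).symm _ _
          fun s => by rw [List.ofFn_succ]; rfl
    _ = ∑ i, ∑ t : Fin k → ι, g (i :: List.ofFn t) := Fintype.sum_prod_type _
    _ = ∑ t : Fin k → ι, ∑ i, g (i :: List.ofFn t) := Finset.sum_comm

lemma sum_ofFn_le_pow_mul (Z : List ι → ℝ) {c : ℝ} (hc : 0 ≤ c)
    (hZ : ∀ s, ∑ i, Z (i :: s) ≤ c * Z s) (k : ℕ) :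
    ∑ s : Fin k → ι, Z (List.ofFn s) ≤ c ^ k * Z [] := by
  induction k with
  | zero => simp
  | succ k ih =>
    calc ∑ s : Fin (k + 1) → ι, Z (List.ofFn s)
        = ∑ t : Fin k → ι, ∑ i, Z (i :: List.ofFn t) := sum_ofFn_succ k Z
      _ ≤ ∑ t : Fin k → ι, c * Z (List.ofFn t) := Finset.sum_le_sum fun t _ => hZ _
      _ = c * ∑ t : Fin k → ι, Z (List.ofFn t) := (Finset.mul_sum _ _ _).symm
      _ ≤ c * (c ^ k * Z []) := mul_le_mul_of_nonneg_left ih hc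
      _ = c ^ (k + 1) * Z [] := by ring

lemma inv_pow_mul_sum_ofFn_le [Nonempty ι] (Z f : List ι → ℝ) {c θ : ℝ} (hc : 0 ≤ c)
    (hθ : 0 ≤ θ) (hf : ∀ s, f s ≤ c * Z s)
    (hZ : ∀ s, ∑ i, Z (i :: s) ≤ Fintype.card ι * θ * Z s) (k : ℕ) :
    ((Fintype.card ι : ℝ) ^ k)⁻¹ * ∑ s : Fin k → ι, f (List.ofFn s) ≤ c * Z [] * θ ^ k := by
  have hcard : (0 : ℝ) < Fintype.card ι := Nat.cast_pos.2 Fintype.card_pos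
  have hsum := sum_ofFn_le_pow_mul Z (by positivity) hZ k
  calc ((Fintype.card ι : ℝ) ^ k)⁻¹ * ∑ s : Fin k → ι, f (List.ofFn s)
      ≤ ((Fintype.card ι : ℝ) ^ k)⁻¹ * (c * ∑ s : Fin k → ι, Z (List.ofFn s)) := by
        gcongr
        rw [Finset.mul_sum]
        exact Finset.sum_le_sum fun s _ => hf _
    _ ≤ ((Fintype.card ι : ℝ) ^ k)⁻¹ * (c * ((Fintype.card ι * θ) ^ k * Z [])) := by
        gcongr
    _ = c * Z [] * θ ^ k := by
        rw [mul_pow]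
        field_simp

end Averaging

lemma sum_ofFn_wat_succ {n : ℕ} {α : Type*} (w0 : α) (W : List (Fin n) → α) (g : α → ℝ)
    (k : ℕ) :
    ∑ s : Fin (k + 1) → Fin n, g (wat w0 W (List.ofFn s)) =
      n * ∑ t : Fin k → Fin n, g (W (List.ofFn t)) := by
  rw [sum_ofFn_succ k fun l => g (wat w0 W l), Finset.mul_sum]
  simp only [wat, Finset.sum_const, Finset.card_univ, Fintype.card_fin, nsmul_eq_mul]

namespace SSIHG

variable {n : ℕ} {E : Type*} [NormedAddCommGroup E] [InnerProductSpace ℝ E]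
  {Fd : Fin n → Type*} [∀ i, NormedAddCommGroup (Fd i)]
  (Gw : E → PiLp 2 Fd → E) (w0 : E) (W : List (Fin n) → E) (D : List (Fin n) → PiLp 2 Fd)

/-- `∇_w φ(w^k, δ^k) - q^k` in the paper's notation, at the step with history `t`. -/
def momentum (t : List (Fin n)) : E :=
  Gw (wat w0 W t) (D t) -
    (Gw (wat w0 W t.tail) (D t.tail) -
      ((n : ℝ) - 1) • (Gw (wat w0 W t) (D t) - Gw (wat w0 W t) (D t.tail)))

/-- The dual iterate obtained by updating every block; `D (i :: s)` agrees with it in block `i`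
and with `D s` elsewhere. -/
def jointUpdate (s : List (Fin n)) : PiLp 2 Fd :=
  WithLp.toLp 2 fun i => D (i :: s) i

noncomputable def lyapunov (wstar : E) (δstar : PiLp 2 Fd) (μ σ τ : ℝ) (t : List (Fin n)) : ℝ :=
  (1 / (2 * σ) + μ / 2) * ‖wat w0 W t - wstar‖ ^ 2
    + (n / (2 * τ) + n * μ / 2) * ‖D t - δstar‖ ^ 2
    + 1 / (8 * σ) * ‖wat w0 W t - wat w0 W t.tail‖ ^ 2
    + n / (2 * τ) * ‖D t - D t.tail‖ ^ 2
    - ⟪momentum Gw w0 W D t, wat w0 W t - wstar⟫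

lemma norm_momentum_le {L11 L12 : ℝ}
    (hLww : ∀ (w w' : E) (δ : PiLp 2 Fd), ‖Gw w δ - Gw w' δ‖ ≤ L11 * ‖w - w'‖)
    (hLwd : ∀ (w : E) (δ δ' : PiLp 2 Fd), ‖Gw w δ - Gw w δ'‖ ≤ L12 * ‖δ - δ'‖)
    (t : List (Fin n)) :
    ‖momentum Gw w0 W D t‖ ≤
      L11 * ‖wat w0 W t - wat w0 W t.tail‖ + n * L12 * ‖D t - D t.tail‖ := by
  set w := wat w0 W t
  set w' := wat w0 W t.tail
  have hsplit : momentum Gw w0 W D t =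
      (n : ℝ) • (Gw w (D t) - Gw w (D t.tail)) + (Gw w (D t.tail) - Gw w' (D t.tail)) := by
    simp only [momentum, w, w']
    module
  calc ‖momentum Gw w0 W D t‖
      ≤ n * ‖Gw w (D t) - Gw w (D t.tail)‖ + ‖Gw w (D t.tail) - Gw w' (D t.tail)‖ := by
        rw [hsplit]
        refine (norm_add_le _ _).trans_eq ?_
        rw [norm_smul, Real.norm_natCast]
    _ ≤ n * (L12 * ‖D t - D t.tail‖) + L11 * ‖w - w'‖ := by
        gcongr
        exacts [hLwd _ _ _, hLww _ _ _]
    _ = L11 * ‖w - w'‖ + n * L12 * ‖D t - D t.tail‖ := by ring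

lemma le_lyapunov {L11 L12 : ℝ}
    (hLww : ∀ (w w' : E) (δ : PiLp 2 Fd), ‖Gw w δ - Gw w' δ‖ ≤ L11 * ‖w - w'‖)
    (hLwd : ∀ (w : E) (δ δ' : PiLp 2 Fd), ‖Gw w δ - Gw w δ'‖ ≤ L12 * ‖δ - δ'‖)
    (wstar : E) (δstar : PiLp 2 Fd) {μ σ τ : ℝ} (hμ : 0 ≤ μ) (hσ : 0 < σ) (hτ : 0 < τ)
    (h11 : σ ^ 2 * L11 ^ 2 ≤ 1 / 9) (h12 : σ * τ * n * L12 ^ 2 ≤ 1 / 9) (t : List (Fin n)) :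
    1 / (6 * σ) * ‖wat w0 W t - wstar‖ ^ 2 + n / (2 * τ) * ‖D t - δstar‖ ^ 2 ≤
      lyapunov Gw w0 W D wstar δstar μ σ τ t := by
  rw [lyapunov]
  set a := ‖wat w0 W t - wstar‖
  set b := ‖D t - δstar‖
  have hm : ⟪momentum Gw w0 W D t, wat w0 W t - wstar⟫ ≤
      (L11 * ‖wat w0 W t - wat w0 W t.tail‖ + n * L12 * ‖D t - D t.tail‖) * a :=
    (real_inner_le_norm _ _).trans
      (mul_le_mul_of_nonneg_right (norm_momentum_le Gw w0 W D hLww hLwd t) (norm_nonneg _))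
  have hcross := mul_le_of_sq_stepsize (P := ‖wat w0 W t - wat w0 W t.tail‖)
    (Q := ‖D t - D t.tail‖) (x := a) (by positivity) hσ hτ h11 h12
  have ha : 1 / (2 * σ) * a ^ 2 = 1 / (6 * σ) * a ^ 2 + 1 / (3 * σ) * a ^ 2 := by
    field_simp; ring
  have : 0 ≤ μ / 2 * a ^ 2 + n * μ / 2 * b ^ 2 := by positivity
  linarith

lemma mvi_step [∀ i, InnerProductSpace ℝ (Fd i)] {Gd : E → PiLp 2 Fd → PiLp 2 Fd}
    {gd : ∀ i, E → Fd i → Fd i} (hGd : ∀ w δ i, Gd w δ i = gd i w (δ i))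
    {f : E → ℝ} {gi : ∀ i, Fd i → ℝ} {wstar : E} {δstar : PiLp 2 Fd} {μ : ℝ}
    (hMVI : ∀ (w : E) (δ : PiLp 2 Fd) (γf : E) (γg : PiLp 2 Fd),
      IsSubgradient f w γf → (∀ i, IsSubgradient (gi i) (δ i) (γg i)) →
      ⟪γf + Gw w δ, w - wstar⟫ + ⟪γg - Gd w δ, δ - δstar⟫ ≥
        (μ / 2) * (‖w - wstar‖ ^ 2 + ‖δ - δstar‖ ^ 2))
    {σ τ θ : ℝ} (s : List (Fin n))
    (hw : ∃ γf : E, IsSubgradient f (W s) γf ∧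
      (0 : E) = γf + σ⁻¹ • (W s - wat w0 W s) + Gw (wat w0 W s) (D s)
        + θ • momentum Gw w0 W D s)
    (hδ : ∀ i, ∃ γ : Fd i, IsSubgradient (gi i) (D (i :: s) i) γ ∧
      (0 : Fd i) = γ + τ⁻¹ • (D (i :: s) i - D s i) - gd i (W s) (D (i :: s) i)) :
    μ / 2 * (‖W s - wstar‖ ^ 2 + ‖jointUpdate D s - δstar‖ ^ 2) ≤
      ⟪Gw (W s) (jointUpdate D s) - Gw (wat w0 W s) (D s), W s - wstar⟫
        - θ * ⟪momentum Gw w0 W D s, W s - wstar⟫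
        - σ⁻¹ * ⟪W s - wat w0 W s, W s - wstar⟫
        - τ⁻¹ * ⟪jointUpdate D s - D s, jointUpdate D s - δstar⟫ := by
  obtain ⟨γf, hγf, hγf_eq⟩ := hw
  choose γg hγg hγg_eq using hδ
  have hmvi := hMVI (W s) (jointUpdate D s) γf (WithLp.toLp 2 γg) hγf hγg
  have hγf' : γf = -(σ⁻¹ • (W s - wat w0 W s) + Gw (wat w0 W s) (D s)
      + θ • momentum Gw w0 W D s) := by
    linear_combination (norm := module) hγf_eq.symm
  have hγg' : WithLp.toLp 2 γg - Gd (W s) (jointUpdate D s) =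
      -(τ⁻¹ • (jointUpdate D s - D s)) := by
    ext i
    simp only [PiLp.sub_apply, PiLp.neg_apply, PiLp.smul_apply, hGd, jointUpdate]
    linear_combination (norm := module) (hγg_eq i).symm
  rw [hγf', neg_add_eq_sub, ← sub_sub, hγg'] at hmvi
  simp only [inner_add_left, inner_sub_left, inner_neg_left, real_inner_smul_left] at hmvi ⊢
  linarith

lemma norm_sq_add_norm_sq_le_lyapunov {L11 L12 : ℝ} (hn : 0 < n)
    (hLww : ∀ (w w' : E) (δ : PiLp 2 Fd), ‖Gw w δ - Gw w' δ‖ ≤ L11 * ‖w - w'‖)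
    (hLwd : ∀ (w : E) (δ δ' : PiLp 2 Fd), ‖Gw w δ - Gw w δ'‖ ≤ L12 * ‖δ - δ'‖)
    (wstar : E) (δstar : PiLp 2 Fd) {μ σ τ : ℝ} (hμ : 0 ≤ μ) (hσ : 0 < σ) (hτ : 0 < τ)
    (h11 : σ ^ 2 * L11 ^ 2 ≤ 1 / 9) (h12 : σ * τ * n * L12 ^ 2 ≤ 1 / 9) (t : List (Fin n)) :
    ‖wstar - wat w0 W t‖ ^ 2 + ‖δstar - D t‖ ^ 2 ≤
      max (6 * σ) (2 * τ / n) * lyapunov Gw w0 W D wstar δstar μ σ τ t := by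
  have hn0 : (0 : ℝ) < n := by exact_mod_cast hn
  set c := max (6 * σ) (2 * τ / n)
  rw [norm_sub_rev wstar, norm_sub_rev δstar]
  calc ‖wat w0 W t - wstar‖ ^ 2 + ‖D t - δstar‖ ^ 2
      = 6 * σ * (1 / (6 * σ) * ‖wat w0 W t - wstar‖ ^ 2)
        + 2 * τ / n * (n / (2 * τ) * ‖D t - δstar‖ ^ 2) := by field_simp
    _ ≤ c * (1 / (6 * σ) * ‖wat w0 W t - wstar‖ ^ 2)
        + c * (n / (2 * τ) * ‖D t - δstar‖ ^ 2) := by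
        gcongr
        exacts [le_max_left _ _, le_max_right _ _]
    _ ≤ c * lyapunov Gw w0 W D wstar δstar μ σ τ t := by
        rw [← mul_add]
        exact mul_le_mul_of_nonneg_left (le_lyapunov Gw w0 W D hLww hLwd wstar δstar hμ hσ hτ
          h11 h12 t) (by positivity)

variable {gw : ∀ i, E → Fd i → E} (hGw : ∀ w δ, Gw w δ = ∑ i, gw i w (δ i))
  (hD : ∀ s i j, j ≠ i → D (i :: s) j = D s j)
include hGw hD

/-- The factor `n - 1` in `q^k` makes the extrapolation unbiased: averaged over the next index
it is the gradient difference of the update in which every block moves. -/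
lemma sum_momentum_cons (hn : 0 < n) (s : List (Fin n)) :
    ∑ i, momentum Gw w0 W D (i :: s) =
      (n : ℝ) • (Gw (W s) (jointUpdate D s) - Gw (wat w0 W s) (D s)) := by
  have : Nonempty (Fin n) := Fin.pos_iff_nonempty.1 hn
  have hsep := sum_separable_of_eq_off_diag (Gw (W s)) (fun j d => gw j (W s) d) (hGw _)
    (D s) (fun i => D (i :: s)) (hD s)
  rw [Fintype.card_fin] at hsep
  calc ∑ i, momentum Gw w0 W D (i :: s)
      = ∑ i, ((n : ℝ) • Gw (W s) (D (i :: s)) - Gw (wat w0 W s) (D s)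
          - ((n : ℝ) - 1) • Gw (W s) (D s)) := by
        refine Finset.sum_congr rfl fun i _ => ?_
        simp only [momentum, wat, List.tail_cons]
        module
    _ = (n : ℝ) • (Gw (W s) (jointUpdate D s) - Gw (wat w0 W s) (D s)) := by
        simp only [Finset.sum_sub_distrib, ← Finset.smul_sum, hsep, Finset.sum_const,
          Finset.card_univ, Fintype.card_fin, ← Nat.cast_smul_eq_nsmul ℝ, jointUpdate]
        module

lemma sum_lyapunov_cons (hn : 0 < n) (wstar : E) (δstar : PiLp 2 Fd) (μ σ τ : ℝ)
    (s : List (Fin n)) :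
    ∑ i, lyapunov Gw w0 W D wstar δstar μ σ τ (i :: s) =
      n * (1 / (2 * σ) + μ / 2) * ‖W s - wstar‖ ^ 2
        + (n / (2 * τ) + n * μ / 2)
          * ((n - 1) * ‖D s - δstar‖ ^ 2 + ‖jointUpdate D s - δstar‖ ^ 2)
        + n * (1 / (8 * σ)) * ‖W s - wat w0 W s‖ ^ 2
        + n / (2 * τ) * ‖jointUpdate D s - D s‖ ^ 2
        - n * ⟪Gw (W s) (jointUpdate D s) - Gw (wat w0 W s) (D s), W s - wstar⟫ := by
  have : Nonempty (Fin n) := Fin.pos_iff_nonempty.1 hn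
  have hnorm (v : PiLp 2 Fd) : ∑ i, ‖D (i :: s) - v‖ ^ 2 =
      ((n : ℝ) - 1) * ‖D s - v‖ ^ 2 + ‖jointUpdate D s - v‖ ^ 2 := by
    have := sum_separable_of_eq_off_diag (fun δ => ‖δ - v‖ ^ 2) (fun j d => ‖d - v j‖ ^ 2)
      (fun δ => by rw [PiLp.norm_sq_eq_of_L2]; rfl) (D s) (fun i => D (i :: s)) (hD s)
    rwa [Fintype.card_fin, smul_eq_mul] at this
  have hinner : ∑ i, ⟪momentum Gw w0 W D (i :: s), W s - wstar⟫ =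
      n * ⟪Gw (W s) (jointUpdate D s) - Gw (wat w0 W s) (D s), W s - wstar⟫ := by
    rw [← sum_inner, sum_momentum_cons Gw w0 W D hGw hD hn, real_inner_smul_left]
  simp only [lyapunov, wat, List.tail_cons, Finset.sum_sub_distrib, Finset.sum_add_distrib,
    ← Finset.mul_sum, hinner, hnorm, sub_self, norm_zero, Finset.sum_const, Finset.card_univ,
    Fintype.card_fin, nsmul_eq_mul]
  ring

lemma sum_lyapunov_cons_le [∀ i, InnerProductSpace ℝ (Fd i)] (hn : 0 < n)
    {Gd : E → PiLp 2 Fd → PiLp 2 Fd} {gd : ∀ i, E → Fd i → Fd i}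
    (hGd : ∀ w δ i, Gd w δ i = gd i w (δ i))
    {f : E → ℝ} {gi : ∀ i, Fd i → ℝ} {wstar : E} {δstar : PiLp 2 Fd} {μ : ℝ}
    (hMVI : ∀ (w : E) (δ : PiLp 2 Fd) (γf : E) (γg : PiLp 2 Fd),
      IsSubgradient f w γf → (∀ i, IsSubgradient (gi i) (δ i) (γg i)) →
      ⟪γf + Gw w δ, w - wstar⟫ + ⟪γg - Gd w δ, δ - δstar⟫ ≥
        (μ / 2) * (‖w - wstar‖ ^ 2 + ‖δ - δstar‖ ^ 2))
    {L11 L12 : ℝ}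
    (hLww : ∀ (w w' : E) (δ : PiLp 2 Fd), ‖Gw w δ - Gw w' δ‖ ≤ L11 * ‖w - w'‖)
    (hLwd : ∀ (w : E) (δ δ' : PiLp 2 Fd), ‖Gw w δ - Gw w δ'‖ ≤ L12 * ‖δ - δ'‖)
    (hμ : 0 ≤ μ) {σ τ θ : ℝ} (hσ : 0 < σ) (hτ : 0 < τ)
    (h11 : σ ^ 2 * L11 ^ 2 ≤ 1 / 9) (h12 : σ * τ * n * L12 ^ 2 ≤ 1 / 9)
    (hθσ : 1 / (1 + μ * σ) ≤ θ) (hθτ : (1 + (n - 1) * μ * τ / n) / (1 + μ * τ) ≤ θ)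
    (hθ1 : θ ≤ 1)
    (hw : ∀ s, ∃ γf : E, IsSubgradient f (W s) γf ∧
      (0 : E) = γf + σ⁻¹ • (W s - wat w0 W s) + Gw (wat w0 W s) (D s)
        + θ • momentum Gw w0 W D s)
    (hδ : ∀ s i, ∃ γ : Fd i, IsSubgradient (gi i) (D (i :: s) i) γ ∧
      (0 : Fd i) = γ + τ⁻¹ • (D (i :: s) i - D s i) - gd i (W s) (D (i :: s) i))
    (s : List (Fin n)) :
    ∑ i, lyapunov Gw w0 W D wstar δstar μ σ τ (i :: s) ≤
      n * θ * lyapunov Gw w0 W D wstar δstar μ σ τ s := by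
  have hmvi := mvi_step Gw w0 W D hGd hMVI s (hw s) (hδ s)
  have hip : -⟪momentum Gw w0 W D s, W s - wat w0 W s⟫ ≤
      1 / (3 * σ) * ‖W s - wat w0 W s‖ ^ 2 + 1 / (8 * σ) * ‖wat w0 W s - wat w0 W s.tail‖ ^ 2
        + n / (2 * τ) * ‖D s - D s.tail‖ ^ 2 :=
    calc -⟪momentum Gw w0 W D s, W s - wat w0 W s⟫
        ≤ ‖momentum Gw w0 W D s‖ * ‖W s - wat w0 W s‖ := by
          rw [← inner_neg_left]
          exact (real_inner_le_norm _ _).trans_eq (by rw [norm_neg])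
      _ ≤ (L11 * ‖wat w0 W s - wat w0 W s.tail‖ + n * L12 * ‖D s - D s.tail‖)
            * ‖W s - wat w0 W s‖ :=
          mul_le_mul_of_nonneg_right (norm_momentum_le Gw w0 W D hLww hLwd s) (norm_nonneg _)
      _ ≤ _ := mul_le_of_sq_stepsize (by positivity) hσ hτ h11 h12
  have hsplit : ⟪momentum Gw w0 W D s, W s - wstar⟫ =
      ⟪momentum Gw w0 W D s, W s - wat w0 W s⟫ + ⟪momentum Gw w0 W D s, wat w0 W s - wstar⟫ := by
    rw [← inner_add_right, sub_add_sub_cancel]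
  rw [hsplit, real_inner_sub_sub_eq, real_inner_sub_sub_eq] at hmvi
  rw [sum_lyapunov_cons Gw w0 W D hGw hD hn, lyapunov]
  exact lyapunov_step_real (Nat.cast_pos.2 hn) hμ hσ hτ hθσ hθτ hθ1 (by linarith) hip

end SSIHG

/-- Index histories are encoded as lists in reverse chronological order (most recent index
first); `W s = w^{|s|+1}(s)`, `D s = δ^{|s|}(s)` (so `D [] = δ^0`), and the expectation
over the uniformly random i.i.d. index sequence is the finite average over all
histories. -/
theorem ssihg_linear_convergence_strong_mvi_general
    {n : ℕ} (hn : 1 ≤ n)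
    {E : Type*} [NormedAddCommGroup E] [InnerProductSpace ℝ E]
    {Fd : Fin n → Type*} [∀ i, NormedAddCommGroup (Fd i)]
    [∀ i, InnerProductSpace ℝ (Fd i)]
    (gw : ∀ i, E → Fd i → E) (gd : ∀ i, E → Fd i → Fd i)
    (Gw : E → PiLp 2 Fd → E)
    (hGw : ∀ w δ, Gw w δ = ∑ i, gw i w (δ i))
    (Gd : E → PiLp 2 Fd → PiLp 2 Fd)
    (hGd : ∀ w δ i, Gd w δ i = gd i w (δ i))
    (L11 L12 : ℝ) (hL11 : 0 < L11) (hL12 : 0 < L12)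
    (hLww : ∀ (w w' : E) (δ : PiLp 2 Fd), ‖Gw w δ - Gw w' δ‖ ≤ L11 * ‖w - w'‖)
    (hLwd : ∀ (w : E) (δ δ' : PiLp 2 Fd), ‖Gw w δ - Gw w δ'‖ ≤ L12 * ‖δ - δ'‖)
    (f : E → ℝ)
    (gi : ∀ i, Fd i → ℝ)
    (wstar : E) (δstar : PiLp 2 Fd) (μ : ℝ) (hμ : 0 < μ)
    (hMVI : ∀ (w : E) (δ : PiLp 2 Fd) (γf : E) (γg : PiLp 2 Fd),
      IsSubgradient f w γf → (∀ i, IsSubgradient (gi i) (δ i) (γg i)) →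
      ⟪γf + Gw w δ, w - wstar⟫ + ⟪γg - Gd w δ, δ - δstar⟫ ≥
        (μ / 2) * (‖w - wstar‖ ^ 2 + ‖δ - δstar‖ ^ 2))
    (σ τ : ℝ) (hσ : 0 < σ) (hτ : 0 < τ)
    (hstep : max (L12 * Real.sqrt (σ * τ * (n : ℝ))) (L11 * σ) ≤ 1 / 3)
    (θ : ℝ)
    (hθ : θ = max (1 / (1 + μ * σ))
      ((1 + ((n : ℝ) - 1) * μ * τ / (n : ℝ)) / (1 + μ * τ)))
    (w0 : E) (W : List (Fin n) → E) (D : List (Fin n) → PiLp 2 Fd)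
    (hupw : ∀ s : List (Fin n), ∃ γf : E, IsSubgradient f (W s) γf ∧
      (0 : E) = γf + σ⁻¹ • (W s - wat w0 W s) + Gw (wat w0 W s) (D s)
        + θ • (Gw (wat w0 W s) (D s)
          - (Gw (wat w0 W s.tail) (D s.tail)
            - ((n : ℝ) - 1) • (Gw (wat w0 W s) (D s) - Gw (wat w0 W s) (D s.tail)))))
    (hupd : ∀ (s : List (Fin n)) (i : Fin n),
      (∀ j, j ≠ i → D (i :: s) j = D s j) ∧
      ∃ γ : Fd i, IsSubgradient (gi i) (D (i :: s) i) γ ∧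
        (0 : Fd i) = γ + τ⁻¹ • (D (i :: s) i - D s i) - gd i (W s) (D (i :: s) i)) :
    ∃ C : ℝ, 0 ≤ C ∧ ∀ K : ℕ, 1 ≤ K →
      ((n : ℝ) ^ (K - 1))⁻¹ *
          (∑ s : Fin (K - 1) → Fin n, ‖wstar - W (List.ofFn s)‖ ^ 2) ≤ C * θ ^ K ∧
      ((n : ℝ) ^ K)⁻¹ *
          (∑ s : Fin K → Fin n, ‖δstar - D (List.ofFn s)‖ ^ 2) ≤ C * θ ^ K := by
  have : Nonempty (Fin n) := Fin.pos_iff_nonempty.1 hn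
  obtain ⟨h11, h12⟩ := sq_le_of_stepsize (Nat.cast_nonneg n) hσ hτ hL11.le hL12.le hstep
  have hθ1 : θ ≤ 1 := hθ ▸ max_contraction_le_one (Nat.cast_pos.2 hn) hμ.le hσ.le hτ.le
  have hθ0 : 0 ≤ θ := (hθ ▸ le_max_left _ _).trans' (by positivity)
  set Z := SSIHG.lyapunov Gw w0 W D wstar δstar μ σ τ
  have hZ : ∀ s, ∑ i, Z (i :: s) ≤ Fintype.card (Fin n) * θ * Z s := by
    rw [Fintype.card_fin]
    exact SSIHG.sum_lyapunov_cons_le Gw w0 W D hGw (fun s i => (hupd s i).1) hn hGd hMVI hLww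
      hLwd hμ.le hσ hτ h11 h12 (hθ ▸ le_max_left _ _) (hθ ▸ le_max_right _ _) hθ1 hupw
      (fun s i => (hupd s i).2)
  have hle := SSIHG.norm_sq_add_norm_sq_le_lyapunov Gw w0 W D hn hLww hLwd wstar δstar hμ.le
    hσ hτ h11 h12
  have hc : 0 ≤ max (6 * σ) (2 * τ / n) := (le_max_left _ _).trans' (by positivity)
  refine ⟨_ * Z [], (by positivity : (0 : ℝ) ≤ _ + _).trans (hle []), fun K hK => ?_⟩
  obtain ⟨k, rfl⟩ := Nat.exists_eq_add_of_le' hK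
  have hw := inv_pow_mul_sum_ofFn_le Z (fun s => ‖wstar - wat w0 W s‖ ^ 2) hc hθ0
    (fun s => (le_add_of_nonneg_right (sq_nonneg _)).trans (hle s)) hZ (k + 1)
  have hδ := inv_pow_mul_sum_ofFn_le Z (fun s => ‖δstar - D s‖ ^ 2) hc hθ0
    (fun s => (le_add_of_nonneg_left (sq_nonneg _)).trans (hle s)) hZ (k + 1)
  rw [Fintype.card_fin, sum_ofFn_wat_succ w0 W fun x => ‖wstar - x‖ ^ 2, pow_succ, mul_inv,
    mul_assoc, inv_mul_cancel_left₀ (by positivity)] at hw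
  rw [Fintype.card_fin] at hδ
  rw [Nat.add_sub_cancel]
  exact ⟨hw, hδ⟩

/-- Theorem 2: linear convergence of SSI-HG under the strong MVI assumption.
Index histories are encoded as lists in reverse chronological order (most recent index
first); `W s = w^{|s|+1}(s)`, `D s = δ^{|s|}(s)` (so `D [] = δ^0`), and the expectation
over the uniformly random i.i.d. index sequence is the finite average over all
histories. -/
theorem ssihg_linear_convergence_strong_mvi
    {n : ℕ} (hn : 1 ≤ n)
    {E : Type*} [NormedAddCommGroup E] [InnerProductSpace ℝ E] [FiniteDimensional ℝ E]
    {Fd : Fin n → Type*} [∀ i, NormedAddCommGroup (Fd i)]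
    [∀ i, InnerProductSpace ℝ (Fd i)] [∀ i, FiniteDimensional ℝ (Fd i)]
    (φ : ∀ i, E → Fd i → ℝ)
    (gw : ∀ i, E → Fd i → E) (gd : ∀ i, E → Fd i → Fd i)
    (hgw : ∀ (i : Fin n) (w : E) (d : Fd i),
      HasGradientAt (fun w' => φ i w' d) (gw i w d) w)
    (hgd : ∀ (i : Fin n) (w : E) (d : Fd i),
      HasGradientAt (fun d' => φ i w d') (gd i w d) d)
    (Gw : E → PiLp 2 Fd → E)
    (hGw : ∀ w δ, Gw w δ = ∑ i, gw i w (δ i))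
    (Gd : E → PiLp 2 Fd → PiLp 2 Fd)
    (hGd : ∀ w δ i, Gd w δ i = gd i w (δ i))
    (L11 L12 L22 : ℝ) (hL11 : 0 < L11) (hL12 : 0 < L12) (hL22 : 0 < L22)
    (hLww : ∀ (w w' : E) (δ : PiLp 2 Fd), ‖Gw w δ - Gw w' δ‖ ≤ L11 * ‖w - w'‖)
    (hLdw : ∀ (w w' : E) (δ : PiLp 2 Fd), ‖Gd w δ - Gd w' δ‖ ≤ L12 * ‖w - w'‖)
    (hLwd : ∀ (w : E) (δ δ' : PiLp 2 Fd), ‖Gw w δ - Gw w δ'‖ ≤ L12 * ‖δ - δ'‖)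
    (hLdd : ∀ (w : E) (δ δ' : PiLp 2 Fd), ‖Gd w δ - Gd w δ'‖ ≤ L22 * ‖δ - δ'‖)
    (f : E → ℝ) (hf : ConvexOn ℝ Set.univ f)
    (gi : ∀ i, Fd i → ℝ) (hgi : ∀ i, ConvexOn ℝ Set.univ (gi i))
    (wstar : E) (δstar : PiLp 2 Fd) (μ : ℝ) (hμ : 0 < μ)
    (hMVI : ∀ (w : E) (δ : PiLp 2 Fd) (γf : E) (γg : PiLp 2 Fd),
      IsSubgradient f w γf → (∀ i, IsSubgradient (gi i) (δ i) (γg i)) →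
      ⟪γf + Gw w δ, w - wstar⟫ + ⟪γg - Gd w δ, δ - δstar⟫ ≥
        (μ / 2) * (‖w - wstar‖ ^ 2 + ‖δ - δstar‖ ^ 2))
    (σ τ : ℝ) (hσ : 0 < σ) (hτ : 0 < τ)
    (hstep : max (L12 * Real.sqrt (σ * τ * (n : ℝ))) (L11 * σ) ≤ 1 / 3)
    (θ : ℝ)
    (hθ : θ = max (1 / (1 + μ * σ))
      ((1 + ((n : ℝ) - 1) * μ * τ / (n : ℝ)) / (1 + μ * τ)))
    (w0 : E) (W : List (Fin n) → E) (D : List (Fin n) → PiLp 2 Fd)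
    (hupw : ∀ s : List (Fin n), ∃ γf : E, IsSubgradient f (W s) γf ∧
      (0 : E) = γf + σ⁻¹ • (W s - wat w0 W s) + Gw (wat w0 W s) (D s)
        + θ • (Gw (wat w0 W s) (D s)
          - (Gw (wat w0 W s.tail) (D s.tail)
            - ((n : ℝ) - 1) • (Gw (wat w0 W s) (D s) - Gw (wat w0 W s) (D s.tail)))))
    (hupd : ∀ (s : List (Fin n)) (i : Fin n),
      (∀ j, j ≠ i → D (i :: s) j = D s j) ∧
      ∃ γ : Fd i, IsSubgradient (gi i) (D (i :: s) i) γ ∧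
        (0 : Fd i) = γ + τ⁻¹ • (D (i :: s) i - D s i) - gd i (W s) (D (i :: s) i)) :
    ∃ C : ℝ, 0 ≤ C ∧ ∀ K : ℕ, 1 ≤ K →
      ((n : ℝ) ^ (K - 1))⁻¹ *
          (∑ s : Fin (K - 1) → Fin n, ‖wstar - W (List.ofFn s)‖ ^ 2) ≤ C * θ ^ K ∧
      ((n : ℝ) ^ K)⁻¹ *
          (∑ s : Fin K → Fin n, ‖δstar - D (List.ofFn s)‖ ^ 2) ≤ C * θ ^ K :=
  ssihg_linear_convergence_strong_mvi_general hn gw gd Gw hGw Gd hGd L11 L12 hL11 hL12 hLww hLwd f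
    gi wstar δstar μ hμ hMVI σ τ hσ hτ hstep θ hθ w0 W D hupw hupd
end

section
/- Corollary 3 (convergence of DSI-HG under the weak MVI assumption). Suppose (w*, δ*) is a solution of the weak MVI with parameter ρ > 0, let θ = 1, and let σ, τ > 0 satisfy max{L12·(στ)^{1/2}, L11·σ} < min{1/3 − ρ(σ^{−1} + 4L11²σ), 1 − ρ(τ^{−1} + 12L12²τ)}. Let (w^k, δ^k) be a DSI-HG trajectory with parameters σ, τ, θ = 1, and for k ≥ 1 let γ_f^k ∈ ∂f(w^k) and γ_g^k ∈ ∂g(δ^k) be the subgradients appearing in its update equations. Then there is a constant C ≥ 0, independent of K, such that for every K ≥ 1: ∑_{k=1}^K ( ‖γ_f^k + ∇_w φ(w^k, δ^k)‖² + ‖γ_g^k − ∇_δ φ(w^k, δ^k)‖² ) ≤ C; in particular the average over the first K iterations of the squared saddle subdifferential norm at (w^k, δ^k) is at most C/K. -/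
open scoped RealInnerProductSpace

open Finset

/-!
Write `uₖ = G_w(zₖ) − G_w(zₖ₋₁)`. With `θ = 1` the update equations say that the saddle residual
at `z_{k+1}` is `(u_{k+1} − uₖ − σ⁻¹(w_{k+1} − wₖ), −τ⁻¹(δ_{k+1} − δₖ))`. Pairing it with
`z_{k+1} − z*` in the weak MVI and expanding with the three-point identity shows that the energy
`‖wₖ − w*‖²/(2σ) + ‖δₖ − δ*‖²/(2τ) − ⟨uₖ, wₖ − w*⟩ + α‖wₖ − wₖ₋₁‖² + β‖δₖ − δₖ₋₁‖²`
drops by at least `ε(‖w_{k+1} − wₖ‖² + ‖δ_{k+1} − δₖ‖²)` at every step: the cross term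
`⟨uₖ, w_{k+1} − wₖ⟩` is split by Young's inequality, and the `ρ`-term is controlled through the
Lipschitz bound on `uₖ`. The step-size condition is exactly what makes `ε > 0` and the energy
nonnegative. Telescoping bounds the sum of the squared increments, and each squared residual is at
most a constant times the squared increments of two consecutive steps.
-/

theorem mul_le_half_mul_sq_add_half_inv_mul_sq {c : ℝ} (hc : 0 < c) (a b : ℝ) :
    a * b ≤ c / 2 * a ^ 2 + c⁻¹ / 2 * b ^ 2 := by
  have hdiff : c / 2 * a ^ 2 + c⁻¹ / 2 * b ^ 2 - a * b = c⁻¹ / 2 * (c * a - b) ^ 2 := by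
    field_simp
    ring
  linarith [show 0 ≤ c⁻¹ / 2 * (c * a - b) ^ 2 by positivity]

theorem two_mul_real_inner_sub_sub {E : Type*} [NormedAddCommGroup E] [InnerProductSpace ℝ E]
    (x y z : E) : 2 * ⟪x - y, x - z⟫ = ‖x - z‖ ^ 2 - ‖y - z‖ ^ 2 + ‖x - y‖ ^ 2 := by
  have h := norm_sub_sq_real (x - z) (y - z)
  rw [sub_sub_sub_cancel_right] at h
  have e : ⟪x - y, x - z⟫ = ‖x - z‖ ^ 2 - ⟪x - z, y - z⟫ := by
    rw [← sub_sub_sub_cancel_right x y z, inner_sub_left, real_inner_self_eq_norm_sq,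
      real_inner_comm]
  linarith

theorem norm_sub_le_of_lipschitz_separately {α β X : Type*} [SeminormedAddCommGroup α]
    [SeminormedAddCommGroup β] [SeminormedAddCommGroup X] {G : α → β → X} {L₁ L₂ : ℝ}
    (h₁ : ∀ x x' y, ‖G x y - G x' y‖ ≤ L₁ * ‖x - x'‖)
    (h₂ : ∀ x y y', ‖G x y - G x y'‖ ≤ L₂ * ‖y - y'‖) (x x' : α) (y y' : β) :
    ‖G x y - G x' y'‖ ≤ L₁ * ‖x - x'‖ + L₂ * ‖y - y'‖ :=
  calc ‖G x y - G x' y'‖ = ‖(G x y - G x' y) + (G x' y - G x' y')‖ := by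
        rw [sub_add_sub_cancel]
    _ ≤ L₁ * ‖x - x'‖ + L₂ * ‖y - y'‖ := (norm_add_le _ _).trans (add_le_add (h₁ _ _ _) (h₂ _ _ _))

theorem sum_Icc_le_of_descent {V x r : ℕ → ℝ} {ε M : ℝ} (hε : 0 < ε) (hM : 0 ≤ M)
    (hV : ∀ k, 0 ≤ V k) (hx : ∀ k, 0 ≤ x k) (hdesc : ∀ k, V (k + 1) + ε * x (k + 1) ≤ V k)
    (hr : ∀ k, r (k + 1) ≤ M * (x (k + 1) + x k)) (K : ℕ) :
    ∑ k ∈ Icc 1 K, r k ≤ M * (x 0 + 2 * V 0 / ε) := by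
  set S := ∑ k ∈ range K, x (k + 1)
  have hS : S ≤ V 0 / ε := by
    have tele : ε * S ≤ V 0 - V K := by
      rw [mul_sum, ← sum_range_sub' V K]
      exact sum_le_sum fun k _ => by linarith [hdesc k]
    rw [le_div_iff₀ hε]
    linarith [hV K]
  have hshift : ∑ k ∈ range K, x k ≤ x 0 + S := by
    rw [add_comm, ← sum_range_succ' x K]
    exact sum_le_sum_of_subset_of_nonneg (range_subset_range.2 K.le_succ) fun k _ _ => hx k
  calc ∑ k ∈ Icc 1 K, r k = ∑ k ∈ range K, r (k + 1) := by
        rw [← Ico_add_one_right_eq_Icc, sum_Ico_eq_sum_range, Nat.add_sub_cancel]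
        simp only [add_comm 1]
    _ ≤ ∑ k ∈ range K, M * (x (k + 1) + x k) := sum_le_sum fun k _ => hr k
    _ = M * (S + ∑ k ∈ range K, x k) := by rw [← mul_sum, sum_add_distrib]
    _ ≤ M * (x 0 + 2 * V 0 / ε) :=
        mul_le_mul_of_nonneg_left (by rw [mul_div_assoc]; linarith) hM

section DSIHG

variable {E F : Type*} [NormedAddCommGroup E] [InnerProductSpace ℝ E] [NormedAddCommGroup F]

/-- `w (k - 1)` is `w 0` at `k = 0`, matching the convention `w⁻¹ = w⁰`. The weight `c` splits the
cross term `L12 ‖δₖ − δₖ₋₁‖ ‖w_{k+1} − wₖ‖` by Young's inequality. -/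
noncomputable def dsihgEnergy (σ τ ρ L11 L12 c : ℝ) (wstar : E) (δstar : F) (w u : ℕ → E)
    (d : ℕ → F) (k : ℕ) : ℝ :=
  σ⁻¹ / 2 * ‖w k - wstar‖ ^ 2 + τ⁻¹ / 2 * ‖d k - δstar‖ ^ 2 - ⟪u k, w k - wstar⟫
    + (L11 / 2 + 3 * ρ * L11 ^ 2) * ‖w k - w (k - 1)‖ ^ 2
    + (c⁻¹ / 2 * L12 + 3 * ρ * L12 ^ 2) * ‖d k - d (k - 1)‖ ^ 2

variable {σ τ ρ L11 L12 c : ℝ} {wstar : E} {δstar : F} {w u a : ℕ → E} {d b : ℕ → F}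

theorem dsihgEnergy_nonneg (hσ : 0 < σ) (hτ : 0 < τ) (hρ : 0 ≤ ρ) (hL11 : 0 ≤ L11)
    (hL12 : 0 ≤ L12) (hc : 0 < c) (hL11σ : L11 * σ ≤ 1 / 2) (hL12σc : L12 * (σ * c) ≤ 1 / 2)
    (hu : ∀ k, ‖u k‖ ≤ L11 * ‖w k - w (k - 1)‖ + L12 * ‖d k - d (k - 1)‖) (k : ℕ) :
    0 ≤ dsihgEnergy σ τ ρ L11 L12 c wstar δstar w u d k := by
  set p := ‖w k - w (k - 1)‖
  set q := ‖d k - d (k - 1)‖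
  set e := ‖w k - wstar‖
  have hinner : ⟪u k, w k - wstar⟫ ≤ σ⁻¹ / 2 * e ^ 2 + σ / 2 * (L11 * p + L12 * q) ^ 2 :=
    calc ⟪u k, w k - wstar⟫ ≤ e * ‖u k‖ := (real_inner_le_norm _ _).trans_eq (mul_comm _ _)
      _ ≤ e * (L11 * p + L12 * q) := mul_le_mul_of_nonneg_left (hu k) (norm_nonneg _)
      _ ≤ σ⁻¹ / 2 * e ^ 2 + σ / 2 * (L11 * p + L12 * q) ^ 2 := by
          simpa only [inv_inv] using
            mul_le_half_mul_sq_add_half_inv_mul_sq (inv_pos.2 hσ) e (L11 * p + L12 * q)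
  have hsplit := mul_le_mul_of_nonneg_left (add_sq_le (a := L11 * p) (b := L12 * q))
    (by positivity : 0 ≤ σ / 2)
  have hL11' : σ * L11 ^ 2 ≤ L11 / 2 := by linarith [mul_le_mul_of_nonneg_left hL11σ hL11]
  have hL12' : σ * L12 ^ 2 ≤ c⁻¹ / 2 * L12 :=
    calc σ * L12 ^ 2 = L12 / c * (L12 * (σ * c)) := by field_simp
      _ ≤ L12 / c * (1 / 2) := mul_le_mul_of_nonneg_left hL12σc (by positivity)
      _ = c⁻¹ / 2 * L12 := by ring
  have hp := mul_le_mul_of_nonneg_right hL11' (sq_nonneg p)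
  have hq := mul_le_mul_of_nonneg_right hL12' (sq_nonneg q)
  have hd : 0 ≤ τ⁻¹ / 2 * ‖d k - δstar‖ ^ 2 := by positivity
  unfold dsihgEnergy
  linarith [mul_nonneg (mul_nonneg hρ (sq_nonneg L11)) (sq_nonneg p),
    mul_nonneg (mul_nonneg hρ (sq_nonneg L12)) (sq_nonneg q)]

variable [InnerProductSpace ℝ F]

theorem norm_sq_residual_le
    (hu : ∀ k, ‖u k‖ ≤ L11 * ‖w k - w (k - 1)‖ + L12 * ‖d k - d (k - 1)‖)
    (ha : ∀ k, a (k + 1) = u (k + 1) - u k - σ⁻¹ • (w (k + 1) - w k))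
    (hb : ∀ k, b (k + 1) = -(τ⁻¹ • (d (k + 1) - d k))) (k : ℕ) :
    ‖a (k + 1)‖ ^ 2 + ‖b (k + 1)‖ ^ 2 ≤
      (3 * σ⁻¹ ^ 2 + 6 * L11 ^ 2) * ‖w (k + 1) - w k‖ ^ 2
        + (τ⁻¹ ^ 2 + 6 * L12 ^ 2) * ‖d (k + 1) - d k‖ ^ 2
        + 6 * L11 ^ 2 * ‖w k - w (k - 1)‖ ^ 2 + 6 * L12 ^ 2 * ‖d k - d (k - 1)‖ ^ 2 := by
  have hu_sq (j : ℕ) : ‖u j‖ ^ 2 ≤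
      2 * ((L11 * ‖w j - w (j - 1)‖) ^ 2 + (L12 * ‖d j - d (j - 1)‖) ^ 2) :=
    (pow_le_pow_left₀ (norm_nonneg _) (hu j) 2).trans add_sq_le
  have hu_succ_sq := hu_sq (k + 1)
  simp only [Nat.add_sub_cancel] at hu_succ_sq
  have ha_le : ‖a (k + 1)‖ ≤ ‖u (k + 1)‖ + ‖u k‖ + |σ⁻¹| * ‖w (k + 1) - w k‖ := by
    rw [ha k, ← Real.norm_eq_abs, ← norm_smul]
    exact (norm_sub_le _ _).trans (add_le_add (norm_sub_le _ _) le_rfl)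
  have ha_sq : ‖a (k + 1)‖ ^ 2 ≤
      3 * (‖u (k + 1)‖ ^ 2 + ‖u k‖ ^ 2 + σ⁻¹ ^ 2 * ‖w (k + 1) - w k‖ ^ 2) := by
    refine (pow_le_pow_left₀ (norm_nonneg _) ha_le 2).trans ?_
    rw [← sq_abs σ⁻¹]
    linarith [sq_nonneg (‖u (k + 1)‖ - ‖u k‖),
      sq_nonneg (‖u (k + 1)‖ - |σ⁻¹| * ‖w (k + 1) - w k‖),
      sq_nonneg (‖u k‖ - |σ⁻¹| * ‖w (k + 1) - w k‖)]
  have hb_sq : ‖b (k + 1)‖ ^ 2 = τ⁻¹ ^ 2 * ‖d (k + 1) - d k‖ ^ 2 := by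
    rw [hb k, norm_neg, norm_smul, Real.norm_eq_abs, mul_pow, sq_abs]
  linarith [hu_sq k]

theorem norm_sq_residual_le_mul_add
    (hu : ∀ k, ‖u k‖ ≤ L11 * ‖w k - w (k - 1)‖ + L12 * ‖d k - d (k - 1)‖)
    (ha : ∀ k, a (k + 1) = u (k + 1) - u k - σ⁻¹ • (w (k + 1) - w k))
    (hb : ∀ k, b (k + 1) = -(τ⁻¹ • (d (k + 1) - d k))) (k : ℕ) :
    ‖a (k + 1)‖ ^ 2 + ‖b (k + 1)‖ ^ 2 ≤ (3 * σ⁻¹ ^ 2 + τ⁻¹ ^ 2 + 6 * L11 ^ 2 + 6 * L12 ^ 2) *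
      ((‖w (k + 1) - w k‖ ^ 2 + ‖d (k + 1) - d k‖ ^ 2)
        + (‖w k - w (k - 1)‖ ^ 2 + ‖d k - d (k - 1)‖ ^ 2)) := by
  nlinarith [norm_sq_residual_le hu ha hb k,
    mul_nonneg (add_nonneg (sq_nonneg τ⁻¹) (sq_nonneg L12)) (sq_nonneg ‖w (k + 1) - w k‖),
    mul_nonneg (add_nonneg (sq_nonneg σ⁻¹) (sq_nonneg L11)) (sq_nonneg ‖d (k + 1) - d k‖),
    mul_nonneg (add_nonneg (add_nonneg (sq_nonneg σ⁻¹) (sq_nonneg τ⁻¹)) (sq_nonneg L12))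
      (sq_nonneg ‖w k - w (k - 1)‖),
    mul_nonneg (add_nonneg (add_nonneg (sq_nonneg σ⁻¹) (sq_nonneg τ⁻¹)) (sq_nonneg L11))
      (sq_nonneg ‖d k - d (k - 1)‖)]

theorem dsihgEnergy_succ_add_le (hρ : 0 ≤ ρ) (hL11 : 0 ≤ L11) (hL12 : 0 ≤ L12) (hc : 0 < c)
    (hu : ∀ k, ‖u k‖ ≤ L11 * ‖w k - w (k - 1)‖ + L12 * ‖d k - d (k - 1)‖)
    (ha : ∀ k, a (k + 1) = u (k + 1) - u k - σ⁻¹ • (w (k + 1) - w k))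
    (hb : ∀ k, b (k + 1) = -(τ⁻¹ • (d (k + 1) - d k)))
    (hmvi : ∀ k, -(ρ / 2) * (‖a (k + 1)‖ ^ 2 + ‖b (k + 1)‖ ^ 2) ≤
      ⟪a (k + 1), w (k + 1) - wstar⟫ + ⟪b (k + 1), d (k + 1) - δstar⟫)
    {ε : ℝ} (hεw : ε ≤ σ⁻¹ / 2 - L11 - c / 2 * L12 - 3 / 2 * ρ * σ⁻¹ ^ 2 - 6 * ρ * L11 ^ 2)
    (hεd : ε ≤ τ⁻¹ / 2 - c⁻¹ / 2 * L12 - 6 * ρ * L12 ^ 2 - ρ / 2 * τ⁻¹ ^ 2) (k : ℕ) :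
    dsihgEnergy σ τ ρ L11 L12 c wstar δstar w u d (k + 1)
        + ε * (‖w (k + 1) - w k‖ ^ 2 + ‖d (k + 1) - d k‖ ^ 2)
      ≤ dsihgEnergy σ τ ρ L11 L12 c wstar δstar w u d k := by
  set p := ‖w k - w (k - 1)‖
  set p' := ‖w (k + 1) - w k‖
  set q := ‖d k - d (k - 1)‖
  set q' := ‖d (k + 1) - d k‖
  have hinner_a : ⟪a (k + 1), w (k + 1) - wstar⟫ =
      ⟪u (k + 1), w (k + 1) - wstar⟫ - ⟪u k, w k - wstar⟫ - ⟪u k, w (k + 1) - w k⟫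
        - σ⁻¹ / 2 * (‖w (k + 1) - wstar‖ ^ 2 - ‖w k - wstar‖ ^ 2 + p' ^ 2) := by
    have hsplit : ⟪u k, w (k + 1) - wstar⟫ = ⟪u k, w (k + 1) - w k⟫ + ⟪u k, w k - wstar⟫ := by
      rw [← inner_add_right, sub_add_sub_cancel]
    rw [ha k, inner_sub_left, inner_sub_left, real_inner_smul_left, hsplit]
    linear_combination (-σ⁻¹ / 2) * two_mul_real_inner_sub_sub (w (k + 1)) (w k) wstar
  have hinner_b : ⟪b (k + 1), d (k + 1) - δstar⟫ =
      -(τ⁻¹ / 2 * (‖d (k + 1) - δstar‖ ^ 2 - ‖d k - δstar‖ ^ 2 + q' ^ 2)) := by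
    rw [hb k, inner_neg_left, real_inner_smul_left]
    linear_combination (-τ⁻¹ / 2) * two_mul_real_inner_sub_sub (d (k + 1)) (d k) δstar
  have hcross : -⟪u k, w (k + 1) - w k⟫ ≤
      L11 / 2 * (p ^ 2 + p' ^ 2) + L12 * (c / 2 * p' ^ 2 + c⁻¹ / 2 * q ^ 2) :=
    calc -⟪u k, w (k + 1) - w k⟫ ≤ ‖u k‖ * p' :=
          (neg_le_abs _).trans (abs_real_inner_le_norm _ _)
      _ ≤ (L11 * p + L12 * q) * p' := mul_le_mul_of_nonneg_right (hu k) (norm_nonneg _)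
      _ ≤ L11 / 2 * (p ^ 2 + p' ^ 2) + L12 * (c / 2 * p' ^ 2 + c⁻¹ / 2 * q ^ 2) := by
          linarith [mul_nonneg hL11 (sq_nonneg (p - p')),
            mul_le_mul_of_nonneg_left (mul_le_half_mul_sq_add_half_inv_mul_sq hc p' q) hL12]
  have hres := mul_le_mul_of_nonneg_left (norm_sq_residual_le hu ha hb k)
    (by positivity : 0 ≤ ρ / 2)
  have hεp := mul_le_mul_of_nonneg_right hεw (sq_nonneg p')
  have hεq := mul_le_mul_of_nonneg_right hεd (sq_nonneg q')
  unfold dsihgEnergy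
  simp only [Nat.add_sub_cancel]
  linarith [hmvi k]

end DSIHG

def DSIHGStepSize (L11 L12 ρ σ τ : ℝ) : Prop :=
  max (L12 * Real.sqrt (σ * τ)) (L11 * σ) <
    min (1 / 3 - ρ * (σ⁻¹ + 4 * L11 ^ 2 * σ)) (1 - ρ * (τ⁻¹ + 12 * L12 ^ 2 * τ))

namespace DSIHGStepSize

variable {L11 L12 ρ σ τ : ℝ}

theorem mul_le_half (hσ : 0 < σ) (hρ : 0 ≤ ρ) (h : DSIHGStepSize L11 L12 ρ σ τ) :
    L11 * σ ≤ 1 / 2 ∧ L12 * Real.sqrt (σ * τ) ≤ 1 / 2 := by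
  have hA : max (L12 * Real.sqrt (σ * τ)) (L11 * σ) < 1 / 3 := by
    refine h.trans_le ((min_le_left _ _).trans ?_)
    linarith [show 0 ≤ ρ * (σ⁻¹ + 4 * L11 ^ 2 * σ) by positivity]
  rw [max_lt_iff] at hA
  constructor <;> linarith

/-- For the Young weight `c = √(στ)/σ` both halves of the split cross term carry `L12 √(στ)`, the
quantity that the step-size condition bounds. -/
theorem exists_pos_le_coeffs (hσ : 0 < σ) (hτ : 0 < τ) (h : DSIHGStepSize L11 L12 ρ σ τ) :
    ∃ ε > 0,
      ε ≤ σ⁻¹ / 2 - L11 - Real.sqrt (σ * τ) / σ / 2 * L12 - 3 / 2 * ρ * σ⁻¹ ^ 2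
        - 6 * ρ * L11 ^ 2 ∧
      ε ≤ τ⁻¹ / 2 - (Real.sqrt (σ * τ) / σ)⁻¹ / 2 * L12 - 6 * ρ * L12 ^ 2 - ρ / 2 * τ⁻¹ ^ 2 := by
  set s := Real.sqrt (σ * τ)
  have hs : 0 < s := Real.sqrt_pos.2 (by positivity)
  have hs_sq : s ^ 2 = σ * τ := Real.sq_sqrt (by positivity)
  unfold DSIHGStepSize at h
  rw [max_lt_iff, lt_min_iff, lt_min_iff] at h
  obtain ⟨⟨hs₁, hs₂⟩, hσ₁, -⟩ := h
  have hεw : σ⁻¹ / 2 - L11 - s / σ / 2 * L12 - 3 / 2 * ρ * σ⁻¹ ^ 2 - 6 * ρ * L11 ^ 2 =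
      (3 * (1 / 3 - ρ * (σ⁻¹ + 4 * L11 ^ 2 * σ)) - 2 * (L11 * σ) - L12 * s) / (2 * σ) := by
    field_simp
    ring
  have hεd : τ⁻¹ / 2 - (s / σ)⁻¹ / 2 * L12 - 6 * ρ * L12 ^ 2 - ρ / 2 * τ⁻¹ ^ 2 =
      (1 - ρ * (τ⁻¹ + 12 * L12 ^ 2 * τ) - L12 * s) / (2 * τ) := by
    field_simp
    linear_combination L12 * τ * hs_sq
  refine ⟨_, lt_min ?_ ?_, min_le_left _ _, min_le_right _ _⟩
  · rw [hεw]; exact div_pos (by linarith) (by positivity)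
  · rw [hεd]; exact div_pos (by linarith) (by positivity)

end DSIHGStepSize

theorem dsihg_convergence_weak_mvi_general
    {E F : Type*}
    [NormedAddCommGroup E] [InnerProductSpace ℝ E]
    [NormedAddCommGroup F] [InnerProductSpace ℝ F]
    (Gw : E → F → E) (Gd : E → F → F)
    (L11 L12 : ℝ) (hL11 : 0 < L11) (hL12 : 0 < L12)
    (hLww : ∀ (w w' : E) (δ : F), ‖Gw w δ - Gw w' δ‖ ≤ L11 * ‖w - w'‖)
    (hLwd : ∀ (w : E) (δ δ' : F), ‖Gw w δ - Gw w δ'‖ ≤ L12 * ‖δ - δ'‖)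
    (f : E → ℝ) (g : F → ℝ)
    (wstar : E) (δstar : F) (ρ : ℝ) (hρ : 0 < ρ)
    (hMVI : ∀ (w : E) (δ : F) (γf : E) (γg : F),
      IsSubgradient f w γf → IsSubgradient g δ γg →
      ⟪γf + Gw w δ, w - wstar⟫ + ⟪γg - Gd w δ, δ - δstar⟫ ≥
        -(ρ / 2) * (‖γf + Gw w δ‖ ^ 2 + ‖γg - Gd w δ‖ ^ 2))
    (σ τ θ : ℝ) (hσ : 0 < σ) (hτ : 0 < τ) (hθ : θ = 1)
    (hstep : max (L12 * Real.sqrt (σ * τ)) (L11 * σ) <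
      min (1 / 3 - ρ * (σ⁻¹ + 4 * L11 ^ 2 * σ)) (1 - ρ * (τ⁻¹ + 12 * L12 ^ 2 * τ)))
    (w : ℕ → E) (d : ℕ → F) (γf : ℕ → E) (γg : ℕ → F)
    (hsubf : ∀ k : ℕ, IsSubgradient f (w (k + 1)) (γf (k + 1)))
    (hsubg : ∀ k : ℕ, IsSubgradient g (d (k + 1)) (γg (k + 1)))
    (hupw : ∀ k : ℕ, (0 : E) = γf (k + 1) + σ⁻¹ • (w (k + 1) - w k) + Gw (w k) (d k)
      + θ • (Gw (w k) (d k) - Gw (w (k - 1)) (d (k - 1))))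
    (hupd : ∀ k : ℕ, (0 : F) = γg (k + 1) + τ⁻¹ • (d (k + 1) - d k)
      - Gd (w (k + 1)) (d (k + 1))) :
    ∃ C : ℝ, 0 ≤ C ∧ ∀ K : ℕ, 1 ≤ K →
      ∑ k ∈ Finset.Icc 1 K,
        (‖γf k + Gw (w k) (d k)‖ ^ 2 + ‖γg k - Gd (w k) (d k)‖ ^ 2) ≤ C := by
  subst hθ
  set c := Real.sqrt (σ * τ) / σ
  set u : ℕ → E := fun k => Gw (w k) (d k) - Gw (w (k - 1)) (d (k - 1))
  set a : ℕ → E := fun k => γf k + Gw (w k) (d k)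
  set b : ℕ → F := fun k => γg k - Gd (w k) (d k)
  have hu (k : ℕ) : ‖u k‖ ≤ L11 * ‖w k - w (k - 1)‖ + L12 * ‖d k - d (k - 1)‖ :=
    norm_sub_le_of_lipschitz_separately hLww hLwd _ _ _ _
  have ha (k : ℕ) : a (k + 1) = u (k + 1) - u k - σ⁻¹ • (w (k + 1) - w k) := by
    simp only [a, u, Nat.add_sub_cancel]
    linear_combination (norm := module) -(hupw k)
  have hb (k : ℕ) : b (k + 1) = -(τ⁻¹ • (d (k + 1) - d k)) := by
    linear_combination (norm := module) -(hupd k)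
  obtain ⟨hL11σ, hL12s⟩ := DSIHGStepSize.mul_le_half hσ hρ.le hstep
  obtain ⟨ε, hε, hεw, hεd⟩ := DSIHGStepSize.exists_pos_le_coeffs hσ hτ hstep
  have hc : 0 < c := by positivity
  have hV := dsihgEnergy_nonneg (wstar := wstar) (δstar := δstar) hσ hτ hρ.le hL11.le hL12.le hc
    hL11σ (by rwa [mul_div_cancel₀ _ hσ.ne']) hu
  have hdesc := dsihgEnergy_succ_add_le hρ.le hL11.le hL12.le hc hu ha hb
    (fun k => hMVI _ _ _ _ (hsubf k) (hsubg k)) hεw hεd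
  have hM : 0 ≤ 3 * σ⁻¹ ^ 2 + τ⁻¹ ^ 2 + 6 * L11 ^ 2 + 6 * L12 ^ 2 := by positivity
  have hsum := sum_Icc_le_of_descent
    (x := fun k => ‖w k - w (k - 1)‖ ^ 2 + ‖d k - d (k - 1)‖ ^ 2)
    (r := fun k => ‖a k‖ ^ 2 + ‖b k‖ ^ 2) hε hM hV
    (fun k => by positivity) hdesc (norm_sq_residual_le_mul_add hu ha hb)
  refine ⟨_, mul_nonneg hM ?_, fun K _ => hsum K⟩
  have hV0 := hV 0
  positivity

/-- Corollary 3: convergence of DSI-HG under the weak MVI assumption. -/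
theorem dsihg_convergence_weak_mvi
    {E F : Type*}
    [NormedAddCommGroup E] [InnerProductSpace ℝ E] [FiniteDimensional ℝ E]
    [NormedAddCommGroup F] [InnerProductSpace ℝ F] [FiniteDimensional ℝ F]
    (φ : E → F → ℝ) (Gw : E → F → E) (Gd : E → F → F)
    (hgw : ∀ (w : E) (δ : F), HasGradientAt (fun w' => φ w' δ) (Gw w δ) w)
    (hgd : ∀ (w : E) (δ : F), HasGradientAt (fun δ' => φ w δ') (Gd w δ) δ)
    (L11 L12 L22 : ℝ) (hL11 : 0 < L11) (hL12 : 0 < L12) (hL22 : 0 < L22)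
    (hLww : ∀ (w w' : E) (δ : F), ‖Gw w δ - Gw w' δ‖ ≤ L11 * ‖w - w'‖)
    (hLdw : ∀ (w w' : E) (δ : F), ‖Gd w δ - Gd w' δ‖ ≤ L12 * ‖w - w'‖)
    (hLwd : ∀ (w : E) (δ δ' : F), ‖Gw w δ - Gw w δ'‖ ≤ L12 * ‖δ - δ'‖)
    (hLdd : ∀ (w : E) (δ δ' : F), ‖Gd w δ - Gd w δ'‖ ≤ L22 * ‖δ - δ'‖)
    (f : E → ℝ) (g : F → ℝ)
    (hf : ConvexOn ℝ Set.univ f) (hg : ConvexOn ℝ Set.univ g)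
    (wstar : E) (δstar : F) (ρ : ℝ) (hρ : 0 < ρ)
    (hMVI : ∀ (w : E) (δ : F) (γf : E) (γg : F),
      IsSubgradient f w γf → IsSubgradient g δ γg →
      ⟪γf + Gw w δ, w - wstar⟫ + ⟪γg - Gd w δ, δ - δstar⟫ ≥
        -(ρ / 2) * (‖γf + Gw w δ‖ ^ 2 + ‖γg - Gd w δ‖ ^ 2))
    (σ τ θ : ℝ) (hσ : 0 < σ) (hτ : 0 < τ) (hθ : θ = 1)
    (hstep : max (L12 * Real.sqrt (σ * τ)) (L11 * σ) <
      min (1 / 3 - ρ * (σ⁻¹ + 4 * L11 ^ 2 * σ)) (1 - ρ * (τ⁻¹ + 12 * L12 ^ 2 * τ)))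
    (w : ℕ → E) (d : ℕ → F) (γf : ℕ → E) (γg : ℕ → F)
    (hsubf : ∀ k : ℕ, IsSubgradient f (w (k + 1)) (γf (k + 1)))
    (hsubg : ∀ k : ℕ, IsSubgradient g (d (k + 1)) (γg (k + 1)))
    (hupw : ∀ k : ℕ, (0 : E) = γf (k + 1) + σ⁻¹ • (w (k + 1) - w k) + Gw (w k) (d k)
      + θ • (Gw (w k) (d k) - Gw (w (k - 1)) (d (k - 1))))
    (hupd : ∀ k : ℕ, (0 : F) = γg (k + 1) + τ⁻¹ • (d (k + 1) - d k)
      - Gd (w (k + 1)) (d (k + 1))) :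
    ∃ C : ℝ, 0 ≤ C ∧ ∀ K : ℕ, 1 ≤ K →
      ∑ k ∈ Finset.Icc 1 K,
        (‖γf k + Gw (w k) (d k)‖ ^ 2 + ‖γg k - Gd (w k) (d k)‖ ^ 2) ≤ C :=
  dsihg_convergence_weak_mvi_general Gw Gd L11 L12 hL11 hL12 hLww hLwd f g wstar δstar ρ hρ hMVI σ τ
    θ hσ hτ hθ hstep w d γf γg hsubf hsubg hupw hupd
end

section
/- Lemma 4 (bound on the momentum cross term). Let σ, τ > 0 and set κ = max{L12·(στn)^{1/2}, L11·σ}. Let w^{k−1}, w^k, w^{k+1} ∈ E and δ^{k−1}, δ^k ∈ F be arbitrary points and define q^k = ∇_w φ(w^{k−1}, δ^{k−1}) − (n−1)(∇_w φ(w^k, δ^k) − ∇_w φ(w^k, δ^{k−1})). Then |⟨w^k − w^{k+1}, ∇_w φ(w^k, δ^k) − q^k⟩| ≤ (κ/σ)·‖w^{k+1} − w^k‖² + (κ/(2σ))·‖w^k − w^{k−1}‖² + (nκ/(2τ))·‖δ^k − δ^{k−1}‖². -/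
open scoped RealInnerProductSpace

/-- Lemma 4: bound on the momentum cross term. -/
theorem momentum_cross_term_bound
    {n : ℕ} (hn : 1 ≤ n)
    {E : Type*} [NormedAddCommGroup E] [InnerProductSpace ℝ E] [FiniteDimensional ℝ E]
    {Fd : Fin n → Type*} [∀ i, NormedAddCommGroup (Fd i)]
    [∀ i, InnerProductSpace ℝ (Fd i)] [∀ i, FiniteDimensional ℝ (Fd i)]
    (φ : ∀ i, E → Fd i → ℝ)
    (gw : ∀ i, E → Fd i → E)
    (hgw : ∀ (i : Fin n) (w : E) (d : Fd i),
      HasGradientAt (fun w' => φ i w' d) (gw i w d) w)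
    (Gw : E → PiLp 2 Fd → E)
    (hGw : ∀ w δ, Gw w δ = ∑ i, gw i w (δ i))
    (L11 L12 : ℝ) (hL11 : 0 < L11) (hL12 : 0 < L12)
    (hLw : ∀ (w w' : E) (δ : PiLp 2 Fd), ‖Gw w δ - Gw w' δ‖ ≤ L11 * ‖w - w'‖)
    (hLwd : ∀ (w : E) (δ δ' : PiLp 2 Fd), ‖Gw w δ - Gw w δ'‖ ≤ L12 * ‖δ - δ'‖)
    (σ τ : ℝ) (hσ : 0 < σ) (hτ : 0 < τ)
    (κ : ℝ) (hκ : κ = max (L12 * Real.sqrt (σ * τ * (n : ℝ))) (L11 * σ))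
    (wkm1 wk wk1 : E) (δkm1 δk : PiLp 2 Fd)
    (qk : E)
    (hq : qk = Gw wkm1 δkm1 - ((n : ℝ) - 1) • (Gw wk δk - Gw wk δkm1)) :
    |⟪wk - wk1, Gw wk δk - qk⟫| ≤
      (κ / σ) * ‖wk1 - wk‖ ^ 2 + (κ / (2 * σ)) * ‖wk - wkm1‖ ^ 2
        + ((n : ℝ) * κ / (2 * τ)) * ‖δk - δkm1‖ ^ 2 := by
  have hA : ‖Gw wk δk - Gw wk δkm1‖ ≤ L12 * ‖δk - δkm1‖ := hLwd wk δk δkm1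
  have hB : ‖Gw wk δkm1 - Gw wkm1 δkm1‖ ≤ L11 * ‖wk - wkm1‖ := hLw wk wkm1 δkm1
  have hrw : Gw wk δk - qk = (n : ℝ) • (Gw wk δk - Gw wk δkm1)
      + (Gw wk δkm1 - Gw wkm1 δkm1) := by
    rw [hq]; module
  set a := ‖wk1 - wk‖ with ha
  set b := ‖wk - wkm1‖ with hb
  set d := ‖δk - δkm1‖ with hd
  have hu : ‖wk - wk1‖ = a := norm_sub_rev wk wk1
  have key : |⟪wk - wk1, Gw wk δk - qk⟫| ≤
      (n : ℝ) * (L12 * d) * a + (L11 * b) * a := by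
    rw [hrw, inner_add_right, real_inner_smul_right]
    calc |(n : ℝ) * ⟪wk - wk1, Gw wk δk - Gw wk δkm1⟫
          + ⟪wk - wk1, Gw wk δkm1 - Gw wkm1 δkm1⟫|
        ≤ |(n : ℝ) * ⟪wk - wk1, Gw wk δk - Gw wk δkm1⟫|
          + |⟪wk - wk1, Gw wk δkm1 - Gw wkm1 δkm1⟫| := abs_add_le _ _
      _ ≤ (n : ℝ) * (‖wk - wk1‖ * ‖Gw wk δk - Gw wk δkm1‖)
          + ‖wk - wk1‖ * ‖Gw wk δkm1 - Gw wkm1 δkm1‖ := by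
          rw [abs_mul, abs_of_nonneg (by positivity : (0:ℝ) ≤ (n:ℝ))]
          gcongr <;> exact abs_real_inner_le_norm _ _
      _ ≤ (n : ℝ) * (L12 * d) * a + (L11 * b) * a := by
          rw [hu]
          have h0 : (0:ℝ) ≤ ‖Gw wk δk - Gw wk δkm1‖ := norm_nonneg _
          have h1 : (0:ℝ) ≤ ‖Gw wk δkm1 - Gw wkm1 δkm1‖ := norm_nonneg _
          have h2 : (0:ℝ) ≤ a := norm_nonneg _
          nlinarith [mul_le_mul_of_nonneg_left hA h2,
            mul_le_mul_of_nonneg_left hB h2]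
  refine key.trans ?_
  set s := Real.sqrt (σ * τ * (n : ℝ)) with hsdef
  have hs0 : 0 ≤ s := Real.sqrt_nonneg _
  have hs2 : s ^ 2 = σ * τ * (n : ℝ) := Real.sq_sqrt (by positivity)
  have hκ1 : L12 * s ≤ κ := hκ ▸ le_max_left _ _
  have hκ2 : L11 * σ ≤ κ := hκ ▸ le_max_right _ _
  have hκ0 : 0 < κ := lt_of_lt_of_le (by positivity) hκ2
  have ha0 : 0 ≤ a := norm_nonneg _
  have hb0 : 0 ≤ b := norm_nonneg _
  have hd0 : 0 ≤ d := norm_nonneg _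
  have hn0 : (1:ℝ) ≤ (n:ℝ) := by exact_mod_cast hn
  have part1 : (n : ℝ) * (L12 * d) * a ≤ (κ / (2 * σ)) * a ^ 2
      + ((n : ℝ) * κ / (2 * τ)) * d ^ 2 := by
    rw [div_mul_eq_mul_div, div_mul_eq_mul_div, div_add_div _ _ (by positivity)
      (by positivity), le_div_iff₀ (by positivity)]
    have hns : (0:ℝ) < (n : ℝ) * σ := by positivity
    have h2 : κ * (s * a - (n : ℝ) * σ * d) ^ 2
        = (n : ℝ) * σ * (κ * τ * a ^ 2 + (n : ℝ) * σ * κ * d ^ 2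
          - 2 * κ * (s * a * d)) := by
      have he : (s * a - (n : ℝ) * σ * d) ^ 2
          = s ^ 2 * a ^ 2 - 2 * ((n : ℝ) * σ) * (s * a * d)
            + ((n : ℝ) * σ * d) ^ 2 := by ring
      rw [he, hs2]; ring
    have h1 := mul_nonneg hκ0.le (sq_nonneg (s * a - (n : ℝ) * σ * d))
    rw [h2] at h1
    have hkey : 0 ≤ κ * τ * a ^ 2 + (n : ℝ) * σ * κ * d ^ 2
        - 2 * κ * (s * a * d) := by nlinarith [h1, hns]
    have h3 : 0 ≤ (κ - L12 * s) * (s * a * d) :=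
      mul_nonneg (sub_nonneg.2 hκ1) (mul_nonneg (mul_nonneg hs0 ha0) hd0)
    have h4 : L12 * s ^ 2 * (a * d) = L12 * (σ * τ * (n : ℝ)) * (a * d) := by
      rw [hs2]
    linarith [hkey, h3, h4]
  have part2 : (L11 * b) * a ≤ (κ / (2 * σ)) * a ^ 2 + (κ / (2 * σ)) * b ^ 2 := by
    rw [div_mul_eq_mul_div, div_mul_eq_mul_div, div_add_div _ _ (by positivity)
      (by positivity), le_div_iff₀ (by positivity)]
    linarith [mul_nonneg (mul_nonneg hσ.le hκ0.le) (sq_nonneg (a - b)),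
      mul_nonneg hσ.le (mul_nonneg (sub_nonneg.2 hκ2) (mul_nonneg ha0 hb0))]
  have hhalf : κ / σ * a ^ 2 = κ / (2 * σ) * a ^ 2 + κ / (2 * σ) * a ^ 2 := by
    field_simp; ring
  have ha2 : 0 ≤ κ / (2 * σ) * a ^ 2 := by positivity
  linarith
end

section
/- Cross-term bound at an arbitrary comparison point (equation (inner_bound) in the proof of Theorem 1). Let σ, τ > 0 and set κ = max{L12·(στn)^{1/2}, L11·σ}. Let w^{K−1}, w^K ∈ E, δ^{K−1}, δ^K ∈ F, and w* ∈ E be arbitrary points and define q^K = ∇_w φ(w^{K−1}, δ^{K−1}) − (n−1)(∇_w φ(w^K, δ^K) − ∇_w φ(w^K, δ^{K−1})). Then |⟨w* − w^K, ∇_w φ(w^K, δ^K) − q^K⟩| ≤ (κ/σ)·‖w* − w^K‖² + (κ/(2σ))·‖w^K − w^{K−1}‖² + (nκ/(2τ))·‖δ^K − δ^{K−1}‖². -/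
open scoped RealInnerProductSpace

/-- Cross-term bound at an arbitrary comparison point (equation (inner_bound)). -/
theorem cross_term_bound_at_comparison_point
    {n : ℕ} (hn : 1 ≤ n)
    {E : Type*} [NormedAddCommGroup E] [InnerProductSpace ℝ E] [FiniteDimensional ℝ E]
    {Fd : Fin n → Type*} [∀ i, NormedAddCommGroup (Fd i)]
    [∀ i, InnerProductSpace ℝ (Fd i)] [∀ i, FiniteDimensional ℝ (Fd i)]
    (φ : ∀ i, E → Fd i → ℝ)
    (gw : ∀ i, E → Fd i → E)
    (hgw : ∀ (i : Fin n) (w : E) (d : Fd i),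
      HasGradientAt (fun w' => φ i w' d) (gw i w d) w)
    (Gw : E → PiLp 2 Fd → E)
    (hGw : ∀ w δ, Gw w δ = ∑ i, gw i w (δ i))
    (L11 L12 : ℝ) (hL11 : 0 < L11) (hL12 : 0 < L12)
    (hLw : ∀ (w w' : E) (δ : PiLp 2 Fd), ‖Gw w δ - Gw w' δ‖ ≤ L11 * ‖w - w'‖)
    (hLwd : ∀ (w : E) (δ δ' : PiLp 2 Fd), ‖Gw w δ - Gw w δ'‖ ≤ L12 * ‖δ - δ'‖)
    (σ τ : ℝ) (hσ : 0 < σ) (hτ : 0 < τ)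
    (κ : ℝ) (hκ : κ = max (L12 * Real.sqrt (σ * τ * (n : ℝ))) (L11 * σ))
    (wstar wKm1 wK : E) (δKm1 δK : PiLp 2 Fd)
    (qK : E)
    (hq : qK = Gw wKm1 δKm1 - ((n : ℝ) - 1) • (Gw wK δK - Gw wK δKm1)) :
    |⟪wstar - wK, Gw wK δK - qK⟫| ≤
      (κ / σ) * ‖wstar - wK‖ ^ 2 + (κ / (2 * σ)) * ‖wK - wKm1‖ ^ 2
        + ((n : ℝ) * κ / (2 * τ)) * ‖δK - δKm1‖ ^ 2 := by
  set a := wstar - wK with ha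
  set Dd := Gw wK δK - Gw wK δKm1 with hDd
  set Dw := Gw wK δKm1 - Gw wKm1 δKm1 with hDw
  have hv : Gw wK δK - qK = (n : ℝ) • Dd + Dw := by
    rw [hq, hDd, hDw]; module
  set x := ‖a‖ with hx
  set yw := ‖wK - wKm1‖ with hyw
  set yd := ‖δK - δKm1‖ with hyd
  have hx0 : 0 ≤ x := norm_nonneg _
  have hyw0 : 0 ≤ yw := norm_nonneg _
  have hyd0 : 0 ≤ yd := norm_nonneg _
  have hn0 : (1 : ℝ) ≤ (n : ℝ) := by exact_mod_cast hn
  have hDdle : ‖Dd‖ ≤ L12 * yd := by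
    have := hLwd wK δK δKm1; simpa [hDd, hyd] using this
  have hDwle : ‖Dw‖ ≤ L11 * yw := by
    have := hLw wK wKm1 δKm1; simpa [hDw, hyw] using this
  have hbound : |⟪a, Gw wK δK - qK⟫| ≤ (n : ℝ) * L12 * x * yd + L11 * x * yw := by
    rw [hv]
    calc |⟪a, (n : ℝ) • Dd + Dw⟫| ≤ ‖a‖ * ‖(n : ℝ) • Dd + Dw‖ := abs_real_inner_le_norm _ _
      _ ≤ x * ((n : ℝ) * ‖Dd‖ + ‖Dw‖) := by
          refine mul_le_mul_of_nonneg_left ?_ hx0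
          refine (norm_add_le _ _).trans ?_
          have : ‖(n : ℝ) • Dd‖ = (n : ℝ) * ‖Dd‖ := by
            rw [norm_smul, Real.norm_eq_abs, abs_of_nonneg (by positivity)]
          rw [this]
      _ ≤ x * ((n : ℝ) * (L12 * yd) + L11 * yw) := by
          refine mul_le_mul_of_nonneg_left ?_ hx0
          gcongr <;> linarith
      _ = (n : ℝ) * L12 * x * yd + L11 * x * yw := by ring
  refine hbound.trans ?_
  clear hbound hv hq hgw hGw hLw hLwd
  set s := Real.sqrt (σ * τ * (n : ℝ)) with hs
  have hs0 : 0 ≤ s := Real.sqrt_nonneg _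
  have hs2 : s ^ 2 = σ * τ * (n : ℝ) := by
    rw [hs, Real.sq_sqrt]; positivity
  have hκ1 : L12 * s ≤ κ := by rw [hκ]; exact le_max_left _ _
  have hκ2 : L11 * σ ≤ κ := by rw [hκ]; exact le_max_right _ _
  have hκ0 : 0 ≤ κ := le_trans (by positivity) hκ2
  -- Young inequality for the δ-term
  have key : 2 * σ * τ * (n : ℝ) * L12 * (x * yd) ≤ κ * τ * x ^ 2 + κ * σ * (n : ℝ) * yd ^ 2 := by
    have am : 2 * (τ * x) * (s * yd) ≤ (τ * x) ^ 2 + (s * yd) ^ 2 := two_mul_le_add_sq _ _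
    have h5 : (κ / τ) * (2 * (τ * x) * (s * yd)) ≤ (κ / τ) * ((τ * x) ^ 2 + (s * yd) ^ 2) :=
      mul_le_mul_of_nonneg_left am (by positivity)
    have e1 : (κ / τ) * ((τ * x) ^ 2 + (s * yd) ^ 2) = κ * τ * x ^ 2 + κ * σ * (n : ℝ) * yd ^ 2 := by
      field_simp
      linear_combination κ * yd ^ 2 * hs2
    have e2 : (κ / τ) * (2 * (τ * x) * (s * yd)) = 2 * κ * s * (x * yd) := by
      field_simp
    have hB : 2 * σ * τ * (n : ℝ) * L12 * (x * yd) ≤ 2 * κ * s * (x * yd) := by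
      have h6 : L12 * s * (s * (x * yd)) ≤ κ * (s * (x * yd)) :=
        mul_le_mul_of_nonneg_right hκ1 (mul_nonneg hs0 (mul_nonneg hx0 hyd0))
      have hA : 2 * σ * τ * (n : ℝ) * L12 * (x * yd) = 2 * (L12 * s * (s * (x * yd))) := by
        linear_combination (-2 * L12 * (x * yd)) * hs2
      linarith [hA ▸ (by linarith [h6] : 2 * (L12 * s * (s * (x * yd))) ≤ 2 * (κ * (s * (x * yd))))]
    rw [e2, e1] at h5
    linarith
  have h1 : (n : ℝ) * L12 * x * yd ≤ κ / (2 * σ) * x ^ 2 + (n : ℝ) * κ / (2 * τ) * yd ^ 2 := by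
    rw [div_mul_eq_mul_div, div_mul_eq_mul_div, div_add_div _ _ (by positivity) (by positivity),
      le_div_iff₀ (by positivity)]
    linarith [key]
  have h2 : L11 * x * yw ≤ κ / (2 * σ) * x ^ 2 + κ / (2 * σ) * yw ^ 2 := by
    rw [div_mul_eq_mul_div, div_mul_eq_mul_div, div_add_div _ _ (by positivity) (by positivity),
      le_div_iff₀ (by positivity)]
    have h2a := mul_le_mul_of_nonneg_left
      (mul_le_mul_of_nonneg_right hκ2 (mul_nonneg hx0 hyw0))
      (by positivity : (0:ℝ) ≤ 2 * σ)
    have h2b : 0 ≤ σ * κ * (x - yw) ^ 2 := by positivity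
    nlinarith [h2a, h2b]
  have hdiv : κ / σ = κ / (2 * σ) + κ / (2 * σ) := by ring
  rw [hdiv]
  linarith
end

section
/- Lemma 6 (bound on the squared saddle subdifferential norm at the full-dimensional update, stated deterministically; case θ = 1). Let σ, τ > 0. Let w^{k−1}, w^k, w^{k+1} ∈ E and δ^{k−1}, δ^k, δ̂^{k+1} ∈ F satisfy: q^k = ∇_w φ(w^{k−1}, δ^{k−1}) − (n−1)(∇_w φ(w^k, δ^k) − ∇_w φ(w^k, δ^{k−1})); there is γ_f^{k+1} ∈ ∂f(w^{k+1}) with 0 = γ_f^{k+1} + σ^{−1}(w^{k+1} − w^k) + 2∇_w φ(w^k, δ^k) − q^k; and there is γ̂_g^{k+1} ∈ ∂g(δ̂^{k+1}) with 0 = γ̂_g^{k+1} + τ^{−1}(δ̂^{k+1} − δ^k) − ∇_δ φ(w^{k+1}, δ̂^{k+1}). Then ‖γ_f^{k+1} + ∇_w φ(w^{k+1}, δ̂^{k+1})‖² + ‖γ̂_g^{k+1} − ∇_δ φ(w^{k+1}, δ̂^{k+1})‖² ≤ (3σ^{−2} + 6L11²)‖w^{k+1} − w^k‖² + 6L11²‖w^k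 − w^{k−1}‖² + (τ^{−2} + 6nL12²)‖δ̂^{k+1} − δ^k‖² + 6n²L12²‖δ^k − δ^{k−1}‖². -/
open scoped RealInnerProductSpace

/-! The update equations are linear: they make the dual residual exactly `-τ⁻¹ (δ̂ - δᵏ)`
and the primal residual `-σ⁻¹ (wᵏ⁺¹ - wᵏ)` plus a pair of differences of `∇_w φ` in `w` and a
pair in `δ`, the latter with weights `1` and `n`. Each pair is bounded through its Lipschitz
constant and `(a + b)² ≤ 2 (a² + b²)`, the three-term sum through
`(a + b + c)² ≤ 3 (a² + b² + c²)`. -/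

theorem add_sq_le_three_mul (a b c : ℝ) : (a + b + c) ^ 2 ≤ 3 * (a ^ 2 + b ^ 2 + c ^ 2) := by
  nlinarith [sq_nonneg (a - b), sq_nonneg (b - c), sq_nonneg (a - c)]

theorem sq_le_sq_mul_sq_of_le_mul {a b L : ℝ} (ha : 0 ≤ a) (h : a ≤ L * b) :
    a ^ 2 ≤ L ^ 2 * b ^ 2 := by
  simpa only [mul_pow] using pow_le_pow_left₀ ha h 2

section Norms

variable {G : Type*} [SeminormedAddCommGroup G]

theorem norm_add_sq_le (x y : G) : ‖x + y‖ ^ 2 ≤ 2 * (‖x‖ ^ 2 + ‖y‖ ^ 2) :=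
  (pow_le_pow_left₀ (norm_nonneg _) (norm_add_le x y) 2).trans add_sq_le

theorem norm_add₃_sq_le (x y z : G) : ‖x + y + z‖ ^ 2 ≤ 3 * (‖x‖ ^ 2 + ‖y‖ ^ 2 + ‖z‖ ^ 2) :=
  (pow_le_pow_left₀ (norm_nonneg _) norm_add₃_le 2).trans (add_sq_le_three_mul _ _ _)

theorem norm_smul_sq [NormedSpace ℝ G] (c : ℝ) (x : G) : ‖c • x‖ ^ 2 = c ^ 2 * ‖x‖ ^ 2 := by
  rw [norm_smul, mul_pow, Real.norm_eq_abs, sq_abs]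

end Norms

section PartialLipschitz

variable {E D : Type*} [SeminormedAddCommGroup E] {G : E → D → E} {L : ℝ}

theorem norm_add_sub_sub_sq_le_of_lipschitz_left
    (hG : ∀ w w' δ, ‖G w δ - G w' δ‖ ≤ L * ‖w - w'‖) (w₀ w w₁ : E) (δ₀ δ₁ : D) :
    ‖(G w₁ δ₁ - G w δ₁) + (G w₀ δ₀ - G w δ₀)‖ ^ 2
      ≤ 2 * L ^ 2 * (‖w₁ - w‖ ^ 2 + ‖w - w₀‖ ^ 2) := by
  have h₁ := sq_le_sq_mul_sq_of_le_mul (norm_nonneg _) (hG w₁ w δ₁)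
  have h₀ := sq_le_sq_mul_sq_of_le_mul (norm_nonneg _) (hG w₀ w δ₀)
  rw [norm_sub_rev w₀] at h₀
  linarith [norm_add_sq_le (G w₁ δ₁ - G w δ₁) (G w₀ δ₀ - G w δ₀)]

theorem norm_add_smul_sub_sq_le_of_lipschitz_right [SeminormedAddCommGroup D] [NormedSpace ℝ E]
    (hG : ∀ w δ δ', ‖G w δ - G w δ'‖ ≤ L * ‖δ - δ'‖) (c : ℝ) (w : E) (δ₀ δ δ₁ : D) :
    ‖(G w δ₁ - G w δ) + c • (G w δ₀ - G w δ)‖ ^ 2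
      ≤ 2 * L ^ 2 * (‖δ₁ - δ‖ ^ 2 + c ^ 2 * ‖δ - δ₀‖ ^ 2) := by
  have h₁ := sq_le_sq_mul_sq_of_le_mul (norm_nonneg _) (hG w δ₁ δ)
  have h₀ := sq_le_sq_mul_sq_of_le_mul (norm_nonneg _) (hG w δ₀ δ)
  rw [norm_sub_rev δ₀] at h₀
  have h₀' := mul_le_mul_of_nonneg_left h₀ (sq_nonneg c)
  rw [← norm_smul_sq] at h₀'
  linarith [norm_add_sq_le (G w δ₁ - G w δ) (c • (G w δ₀ - G w δ))]

end PartialLipschitz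

theorem saddle_subdifferential_norm_bound_full_update_general
    {n : ℕ} (hn : 1 ≤ n)
    {E : Type*} [NormedAddCommGroup E] [InnerProductSpace ℝ E]
    {Fd : Fin n → Type*} [∀ i, NormedAddCommGroup (Fd i)]
    [∀ i, InnerProductSpace ℝ (Fd i)]
    (Gw : E → PiLp 2 Fd → E)
    (Gd : E → PiLp 2 Fd → PiLp 2 Fd)
    (L11 L12 : ℝ)
    (hLw : ∀ (w w' : E) (δ : PiLp 2 Fd), ‖Gw w δ - Gw w' δ‖ ≤ L11 * ‖w - w'‖)
    (hLwd : ∀ (w : E) (δ δ' : PiLp 2 Fd), ‖Gw w δ - Gw w δ'‖ ≤ L12 * ‖δ - δ'‖)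
    (σ τ : ℝ)
    (wkm1 wk wk1 : E) (δkm1 δk δhat : PiLp 2 Fd)
    (qk : E)
    (hq : qk = Gw wkm1 δkm1 - ((n : ℝ) - 1) • (Gw wk δk - Gw wk δkm1))
    (γf : E)
    (hupw : (0 : E) = γf + σ⁻¹ • (wk1 - wk) + (2 : ℝ) • Gw wk δk - qk)
    (γghat : PiLp 2 Fd)
    (hupd : (0 : PiLp 2 Fd) = γghat + τ⁻¹ • (δhat - δk) - Gd wk1 δhat) :
    ‖γf + Gw wk1 δhat‖ ^ 2 + ‖γghat - Gd wk1 δhat‖ ^ 2 ≤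
      (3 * (σ⁻¹) ^ 2 + 6 * L11 ^ 2) * ‖wk1 - wk‖ ^ 2
        + 6 * L11 ^ 2 * ‖wk - wkm1‖ ^ 2
        + ((τ⁻¹) ^ 2 + 6 * (n : ℝ) * L12 ^ 2) * ‖δhat - δk‖ ^ 2
        + 6 * (n : ℝ) ^ 2 * L12 ^ 2 * ‖δk - δkm1‖ ^ 2 := by
  have hprimal : γf + Gw wk1 δhat = -(σ⁻¹ • (wk1 - wk))
      + ((Gw wk1 δhat - Gw wk δhat) + (Gw wkm1 δkm1 - Gw wk δkm1))
      + ((Gw wk δhat - Gw wk δk) + (n : ℝ) • (Gw wk δkm1 - Gw wk δk)) := by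
    linear_combination (norm := module) hq - hupw
  have hdual : γghat - Gd wk1 δhat = -(τ⁻¹ • (δhat - δk)) := by
    linear_combination (norm := module) -hupd
  have hw := norm_add_sub_sub_sq_le_of_lipschitz_left hLw wkm1 wk wk1 δkm1 δhat
  have hδ := norm_add_smul_sub_sq_le_of_lipschitz_right hLwd (n : ℝ) wk δkm1 δk δhat
  have hslack : 0 ≤ L12 ^ 2 * ‖δhat - δk‖ ^ 2 * ((n : ℝ) - 1) :=
    mul_nonneg (by positivity) (sub_nonneg.2 (by exact_mod_cast hn))
  rw [hprimal, hdual, norm_neg, norm_smul_sq]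
  grw [norm_add₃_sq_le, norm_neg, norm_smul_sq, hw, hδ]
  linarith

/-- Lemma 6: bound on the squared saddle subdifferential norm at the full-dimensional
update, stated deterministically, in the case θ = 1. -/
theorem saddle_subdifferential_norm_bound_full_update
    {n : ℕ} (hn : 1 ≤ n)
    {E : Type*} [NormedAddCommGroup E] [InnerProductSpace ℝ E] [FiniteDimensional ℝ E]
    {Fd : Fin n → Type*} [∀ i, NormedAddCommGroup (Fd i)]
    [∀ i, InnerProductSpace ℝ (Fd i)] [∀ i, FiniteDimensional ℝ (Fd i)]
    (φ : ∀ i, E → Fd i → ℝ)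
    (gw : ∀ i, E → Fd i → E) (gd : ∀ i, E → Fd i → Fd i)
    (hgw : ∀ (i : Fin n) (w : E) (d : Fd i),
      HasGradientAt (fun w' => φ i w' d) (gw i w d) w)
    (hgd : ∀ (i : Fin n) (w : E) (d : Fd i),
      HasGradientAt (fun d' => φ i w d') (gd i w d) d)
    (Gw : E → PiLp 2 Fd → E)
    (hGw : ∀ w δ, Gw w δ = ∑ i, gw i w (δ i))
    (Gd : E → PiLp 2 Fd → PiLp 2 Fd)
    (hGd : ∀ w δ i, Gd w δ i = gd i w (δ i))
    (L11 L12 : ℝ) (hL11 : 0 < L11) (hL12 : 0 < L12)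
    (hLw : ∀ (w w' : E) (δ : PiLp 2 Fd), ‖Gw w δ - Gw w' δ‖ ≤ L11 * ‖w - w'‖)
    (hLwd : ∀ (w : E) (δ δ' : PiLp 2 Fd), ‖Gw w δ - Gw w δ'‖ ≤ L12 * ‖δ - δ'‖)
    (f : E → ℝ) (hf : ConvexOn ℝ Set.univ f)
    (gi : ∀ i, Fd i → ℝ) (hgi : ∀ i, ConvexOn ℝ Set.univ (gi i))
    (σ τ : ℝ) (hσ : 0 < σ) (hτ : 0 < τ)
    (wkm1 wk wk1 : E) (δkm1 δk δhat : PiLp 2 Fd)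
    (qk : E)
    (hq : qk = Gw wkm1 δkm1 - ((n : ℝ) - 1) • (Gw wk δk - Gw wk δkm1))
    (γf : E) (hsubf : IsSubgradient f wk1 γf)
    (hupw : (0 : E) = γf + σ⁻¹ • (wk1 - wk) + (2 : ℝ) • Gw wk δk - qk)
    (γghat : PiLp 2 Fd) (hsubg : ∀ i, IsSubgradient (gi i) (δhat i) (γghat i))
    (hupd : (0 : PiLp 2 Fd) = γghat + τ⁻¹ • (δhat - δk) - Gd wk1 δhat) :
    ‖γf + Gw wk1 δhat‖ ^ 2 + ‖γghat - Gd wk1 δhat‖ ^ 2 ≤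
      (3 * (σ⁻¹) ^ 2 + 6 * L11 ^ 2) * ‖wk1 - wk‖ ^ 2
        + 6 * L11 ^ 2 * ‖wk - wkm1‖ ^ 2
        + ((τ⁻¹) ^ 2 + 6 * (n : ℝ) * L12 ^ 2) * ‖δhat - δk‖ ^ 2
        + 6 * (n : ℝ) ^ 2 * L12 ^ 2 * ‖δk - δkm1‖ ^ 2 :=
  saddle_subdifferential_norm_bound_full_update_general hn Gw Gd L11 L12 hLw hLwd σ τ wkm1 wk wk1
    δkm1 δk δhat qk hq γf hupw γghat hupd
end

section
/- Bound on the deviation of the momentum-corrected gradient (equation (lemma6_2)). Let w^{k−1}, w^k ∈ E and δ^{k−1}, δ^k ∈ F be arbitrary points and define q^k = ∇_w φ(w^{k−1}, δ^{k−1}) − (n−1)(∇_w φ(w^k, δ^k) − ∇_w φ(w^k, δ^{k−1})). Then ‖∇_w φ(w^k, δ^k) − q^k‖² ≤ 2n²L12²‖δ^k − δ^{k−1}‖² + 2L11²‖w^k − w^{k−1}‖². -/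
open scoped RealInnerProductSpace

private lemma sq_norm_add_le {E : Type*} [NormedAddCommGroup E] (a b : E) :
    ‖a + b‖^2 ≤ 2*‖a‖^2 + 2*‖b‖^2 := by
  have h := norm_add_le a b
  nlinarith [norm_nonneg (a+b), sq_nonneg (‖a‖ - ‖b‖),
    mul_le_mul h h (norm_nonneg _) (by positivity : (0:ℝ) ≤ ‖a‖+‖b‖)]

/-- Bound on the deviation of the momentum-corrected gradient (equation (lemma6_2)). -/
theorem momentum_corrected_gradient_deviation_bound
    {n : ℕ} (hn : 1 ≤ n)
    {E : Type*} [NormedAddCommGroup E] [InnerProductSpace ℝ E] [FiniteDimensional ℝ E]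
    {Fd : Fin n → Type*} [∀ i, NormedAddCommGroup (Fd i)]
    [∀ i, InnerProductSpace ℝ (Fd i)] [∀ i, FiniteDimensional ℝ (Fd i)]
    (φ : ∀ i, E → Fd i → ℝ)
    (gw : ∀ i, E → Fd i → E)
    (hgw : ∀ (i : Fin n) (w : E) (d : Fd i),
      HasGradientAt (fun w' => φ i w' d) (gw i w d) w)
    (Gw : E → PiLp 2 Fd → E)
    (hGw : ∀ w δ, Gw w δ = ∑ i, gw i w (δ i))
    (L11 L12 : ℝ) (hL11 : 0 < L11) (hL12 : 0 < L12)
    (hLw : ∀ (w w' : E) (δ : PiLp 2 Fd), ‖Gw w δ - Gw w' δ‖ ≤ L11 * ‖w - w'‖)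
    (hLwd : ∀ (w : E) (δ δ' : PiLp 2 Fd), ‖Gw w δ - Gw w δ'‖ ≤ L12 * ‖δ - δ'‖)
    (wkm1 wk : E) (δkm1 δk : PiLp 2 Fd)
    (qk : E)
    (hq : qk = Gw wkm1 δkm1 - ((n : ℝ) - 1) • (Gw wk δk - Gw wk δkm1)) :
    ‖Gw wk δk - qk‖ ^ 2 ≤
      2 * (n : ℝ) ^ 2 * L12 ^ 2 * ‖δk - δkm1‖ ^ 2
        + 2 * L11 ^ 2 * ‖wk - wkm1‖ ^ 2 := by
  set A := Gw wk δk - Gw wk δkm1 with hA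
  set B := Gw wk δkm1 - Gw wkm1 δkm1 with hB
  have key : Gw wk δk - qk = (n : ℝ) • A + B := by
    rw [hq, hA, hB]
    rw [sub_smul, one_smul]; abel
  rw [key]
  have hnA : ‖(n : ℝ) • A‖ = (n : ℝ) * ‖A‖ := by
    rw [norm_smul, Real.norm_eq_abs, abs_of_nonneg (by positivity)]
  have h1 : ‖A‖ ≤ L12 * ‖δk - δkm1‖ := hLwd wk δk δkm1
  have h2 : ‖B‖ ≤ L11 * ‖wk - wkm1‖ := hLw wk wkm1 δkm1
  have h3 := sq_norm_add_le ((n : ℝ) • A) B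
  rw [hnA] at h3
  have hAnn : (0:ℝ) ≤ ‖A‖ := norm_nonneg _
  have hBnn : (0:ℝ) ≤ ‖B‖ := norm_nonneg _
  have hnn : (0:ℝ) ≤ (n:ℝ) := by positivity
  have h1' : (n:ℝ) * ‖A‖ ≤ (n:ℝ) * (L12 * ‖δk - δkm1‖) := by gcongr
  nlinarith [mul_le_mul h1' h1' (by positivity) (by positivity : (0:ℝ) ≤ (n:ℝ) * (L12 * ‖δk - δkm1‖)),
    mul_le_mul h2 h2 hBnn (by positivity : (0:ℝ) ≤ L11 * ‖wk - wkm1‖)]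
end

section
/- One-step Lyapunov contraction for DSI-HG under the strong MVI assumption (deterministic case n = 1, intermediate step in the proof of Corollary 4). Suppose (w*, δ*) is a solution of the strong MVI with parameter μ > 0, let σ, τ > 0 satisfy κ := max{L12·(στ)^{1/2}, L11·σ} ≤ 1/3, and set θ = max{1/(1 + μσ), 1/(1 + μτ)}. Let (w^k, δ^k) be a DSI-HG trajectory with parameters σ, τ, θ, and for k ≥ 0 define G^k = ⟨w* − w^k, ∇_w φ(w^k, δ^k) − ∇_w φ(w^{k−1}, δ^{k−1})⟩ + ((1 + μσ)/(2σ))‖w* − w^k‖² + ((1 + μτ)/(2τ))‖δ* − δ^k‖² + (κ/(2σ))‖w^k − w^{k−1}‖² + (κ/(2τ))‖δ^k − δ^{k−1}‖² (with the convention (w^{−1}, δ^{−1}) = (w^0, δ^0)). Then G^{k+1} ≤ θ·G^k for every k ≥ 0. -/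
open scoped RealInnerProductSpace

private lemma inner_half' {X : Type*} [NormedAddCommGroup X] [InnerProductSpace ℝ X]
    (x y z : X) : ⟪x - y, x - z⟫ = (‖x - y‖^2 + ‖x - z‖^2 - ‖y - z‖^2)/2 := by
  simp only [norm_sub_sq_real, inner_sub_left, inner_sub_right, real_inner_self_eq_norm_sq]
  rw [real_inner_comm y x, real_inner_comm z x, real_inner_comm z y]
  ring


private lemma pieceA' (κ σ L11 c c' : ℝ) (hL11 : 0 < L11) (hσ : 0 < σ)
    (h : L11 * σ ≤ κ) : 2*σ*(L11*c'*c) ≤ κ*c'^2 + κ*c^2 := by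
  nlinarith [mul_nonneg (mul_nonneg hL11.le hσ.le) (sq_nonneg (c'-c)),
    mul_nonneg (sub_nonneg.mpr h) (add_nonneg (sq_nonneg c') (sq_nonneg c))]

private lemma pieceB' (κ σ τ L12 c f' : ℝ) (hL12 : 0 < L12) (hσ : 0 < σ) (hτ : 0 < τ)
    (h : L12 * Real.sqrt (σ*τ) ≤ κ) : 2*σ*τ*(L12*f'*c) ≤ κ*τ*c^2 + κ*σ*f'^2 := by
  have hs : Real.sqrt (σ*τ) ^ 2 = σ*τ := Real.sq_sqrt (by positivity)
  have hs2 : Real.sqrt σ * Real.sqrt τ = Real.sqrt (σ*τ) := (Real.sqrt_mul hσ.le τ).symm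
  have hsσ : Real.sqrt σ ^ 2 = σ := Real.sq_sqrt hσ.le
  have hsτ : Real.sqrt τ ^ 2 = τ := Real.sq_sqrt hτ.le
  have hspos : 0 < Real.sqrt (σ*τ) := Real.sqrt_pos.mpr (by positivity)
  have k1 : 0 ≤ L12 * Real.sqrt (σ*τ) * (Real.sqrt τ * c - Real.sqrt σ * f')^2 :=
    mul_nonneg (mul_nonneg hL12.le hspos.le) (sq_nonneg _)
  have k2 : 0 ≤ (κ - L12 * Real.sqrt (σ*τ)) * (τ*c^2 + σ*f'^2) :=
    mul_nonneg (sub_nonneg.mpr h)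
      (add_nonneg (mul_nonneg hτ.le (sq_nonneg c)) (mul_nonneg hσ.le (sq_nonneg f')))
  have e : L12 * Real.sqrt (σ*τ) * (Real.sqrt τ * c - Real.sqrt σ * f')^2
      = L12 * Real.sqrt (σ*τ) * τ * c^2 - 2*L12*(σ*τ)*c*f'
        + L12 * Real.sqrt (σ*τ) * σ * f'^2 := by
    linear_combination (L12*Real.sqrt (σ*τ)*c^2) * hsτ + (L12*Real.sqrt (σ*τ)*f'^2) * hsσ
      - (2*L12*c*f'*Real.sqrt (σ*τ)) * hs2 - (2*L12*c*f') * hs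
  rw [e] at k1
  linarith only [k1, k2]

set_option maxHeartbeats 1000000 in
/-- One-step Lyapunov contraction for DSI-HG under the strong MVI assumption
(deterministic case n = 1, intermediate step in the proof of Corollary 4). -/
theorem dsihg_one_step_lyapunov_contraction_strong_mvi
    {E F : Type*}
    [NormedAddCommGroup E] [InnerProductSpace ℝ E] [FiniteDimensional ℝ E]
    [NormedAddCommGroup F] [InnerProductSpace ℝ F] [FiniteDimensional ℝ F]
    (φ : E → F → ℝ) (Gw : E → F → E) (Gd : E → F → F)
    (hgw : ∀ (w : E) (δ : F), HasGradientAt (fun w' => φ w' δ) (Gw w δ) w)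
    (hgd : ∀ (w : E) (δ : F), HasGradientAt (fun δ' => φ w δ') (Gd w δ) δ)
    (L11 L12 L22 : ℝ) (hL11 : 0 < L11) (hL12 : 0 < L12) (hL22 : 0 < L22)
    (hLww : ∀ (w w' : E) (δ : F), ‖Gw w δ - Gw w' δ‖ ≤ L11 * ‖w - w'‖)
    (hLdw : ∀ (w w' : E) (δ : F), ‖Gd w δ - Gd w' δ‖ ≤ L12 * ‖w - w'‖)
    (hLwd : ∀ (w : E) (δ δ' : F), ‖Gw w δ - Gw w δ'‖ ≤ L12 * ‖δ - δ'‖)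
    (hLdd : ∀ (w : E) (δ δ' : F), ‖Gd w δ - Gd w δ'‖ ≤ L22 * ‖δ - δ'‖)
    (f : E → ℝ) (g : F → ℝ)
    (hf : ConvexOn ℝ Set.univ f) (hg : ConvexOn ℝ Set.univ g)
    (wstar : E) (δstar : F) (μ : ℝ) (hμ : 0 < μ)
    (hMVI : ∀ (w : E) (δ : F) (γf : E) (γg : F),
      IsSubgradient f w γf → IsSubgradient g δ γg →
      ⟪γf + Gw w δ, w - wstar⟫ + ⟪γg - Gd w δ, δ - δstar⟫ ≥
        (μ / 2) * (‖w - wstar‖ ^ 2 + ‖δ - δstar‖ ^ 2))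
    (σ τ : ℝ) (hσ : 0 < σ) (hτ : 0 < τ)
    (κ : ℝ) (hκ : κ = max (L12 * Real.sqrt (σ * τ)) (L11 * σ)) (hκle : κ ≤ 1 / 3)
    (θ : ℝ) (hθ : θ = max (1 / (1 + μ * σ)) (1 / (1 + μ * τ)))
    (w : ℕ → E) (d : ℕ → F)
    (htraj : ∀ k : ℕ, ∃ (γf : E) (γg : F),
      IsSubgradient f (w (k + 1)) γf ∧ IsSubgradient g (d (k + 1)) γg ∧
      (0 : E) = γf + σ⁻¹ • (w (k + 1) - w k) + Gw (w k) (d k)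
        + θ • (Gw (w k) (d k) - Gw (w (k - 1)) (d (k - 1))) ∧
      (0 : F) = γg + τ⁻¹ • (d (k + 1) - d k) - Gd (w (k + 1)) (d (k + 1))) :
    ∀ k : ℕ,
      ⟪wstar - w (k + 1), Gw (w (k + 1)) (d (k + 1)) - Gw (w k) (d k)⟫
          + ((1 + μ * σ) / (2 * σ)) * ‖wstar - w (k + 1)‖ ^ 2
          + ((1 + μ * τ) / (2 * τ)) * ‖δstar - d (k + 1)‖ ^ 2
          + (κ / (2 * σ)) * ‖w (k + 1) - w k‖ ^ 2
          + (κ / (2 * τ)) * ‖d (k + 1) - d k‖ ^ 2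
        ≤ θ *
          (⟪wstar - w k, Gw (w k) (d k) - Gw (w (k - 1)) (d (k - 1))⟫
            + ((1 + μ * σ) / (2 * σ)) * ‖wstar - w k‖ ^ 2
            + ((1 + μ * τ) / (2 * τ)) * ‖δstar - d k‖ ^ 2
            + (κ / (2 * σ)) * ‖w k - w (k - 1)‖ ^ 2
            + (κ / (2 * τ)) * ‖d k - d (k - 1)‖ ^ 2) := by
  -- scalar facts about θ and κ
  have hθpos : 0 < θ := by
    rw [hθ]; exact lt_max_of_lt_left (by positivity)
  have hθ1 : θ ≤ 1 := by
    rw [hθ]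
    apply max_le
    · rw [div_le_one (by positivity)]; nlinarith
    · rw [div_le_one (by positivity)]; nlinarith
  have hθσ : 1 ≤ θ * (1 + μ * σ) := by
    have h1 : 1 / (1 + μ * σ) ≤ θ := hθ ▸ le_max_left _ _
    rw [div_le_iff₀ (by positivity)] at h1; linarith
  have hθτ : 1 ≤ θ * (1 + μ * τ) := by
    have h1 : 1 / (1 + μ * τ) ≤ θ := hθ ▸ le_max_right _ _
    rw [div_le_iff₀ (by positivity)] at h1; linarith
  have hL11σ : L11 * σ ≤ κ := hκ ▸ le_max_right _ _
  have hL12s : L12 * Real.sqrt (σ * τ) ≤ κ := hκ ▸ le_max_left _ _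
  have hκpos : 0 < κ := lt_of_lt_of_le (by positivity) hL11σ
  have hκθ : κ * (1 + 2 * θ) ≤ 1 := by nlinarith
  intro k
  obtain ⟨γf, γg, hγf, hγg, heqw, heqd⟩ := htraj k
  set a : E := Gw (w k) (d k) - Gw (w (k-1)) (d (k-1)) with ha
  set a' : E := Gw (w (k+1)) (d (k+1)) - Gw (w k) (d k) with ha'
  set Δw : E := w (k+1) - w k with hΔw
  set Δδ : F := d (k+1) - d k with hΔδ
  -- rewrite the trajectory conditions
  have hγf' : γf + Gw (w (k+1)) (d (k+1)) = a' - σ⁻¹ • Δw - θ • a := by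
    rw [ha', hΔw, ha]
    have h := heqw
    linear_combination (norm := module) -h
  have hγg' : γg - Gd (w (k+1)) (d (k+1)) = -(τ⁻¹ • Δδ) := by
    rw [hΔδ]
    linear_combination (norm := module) -heqd
  have hm := hMVI (w (k+1)) (d (k+1)) γf γg hγf hγg
  rw [hγf', hγg'] at hm
  simp only [inner_sub_left, inner_neg_left, real_inner_smul_left] at hm
  -- polarization identities
  have hIw : ⟪Δw, w (k+1) - wstar⟫
      = (‖Δw‖^2 + ‖w (k+1) - wstar‖^2 - ‖w k - wstar‖^2)/2 := by
    rw [hΔw]; exact inner_half' (w (k+1)) (w k) wstar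
  have hIδ : ⟪Δδ, d (k+1) - δstar⟫
      = (‖Δδ‖^2 + ‖d (k+1) - δstar‖^2 - ‖d k - δstar‖^2)/2 := by
    rw [hΔδ]; exact inner_half' (d (k+1)) (d k) δstar
  have hsplit : ⟪a, w (k+1) - wstar⟫ = ⟪a, w k - wstar⟫ + ⟪a, Δw⟫ := by
    have h : w (k+1) - wstar = (w k - wstar) + Δw := by rw [hΔw]; abel
    rw [h, inner_add_right]
  rw [hIw, hIδ, hsplit] at hm
  -- coefficient splittings
  have hσ0 : σ ≠ 0 := ne_of_gt hσ
  have hτ0 : τ ≠ 0 := ne_of_gt hτ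
  have hc1 : (1 + μ * σ) / (2 * σ) = σ⁻¹/2 + μ/2 := by field_simp
  have hc2 : (1 + μ * τ) / (2 * τ) = τ⁻¹/2 + μ/2 := by field_simp
  have hc3 : κ / (2 * σ) = κ*σ⁻¹/2 := by rw [div_eq_mul_inv, mul_inv]; ring
  have hc4 : κ / (2 * τ) = κ*τ⁻¹/2 := by rw [div_eq_mul_inv, mul_inv]; ring
  -- rearranged main inequality
  have h_main : -⟪a', w (k+1) - wstar⟫
      + (σ⁻¹/2 + μ/2) * ‖w (k+1) - wstar‖^2
      + (τ⁻¹/2 + μ/2) * ‖d (k+1) - δstar‖^2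
      ≤ (σ⁻¹/2) * ‖w k - wstar‖^2 + (τ⁻¹/2) * ‖d k - δstar‖^2
        - θ * ⟪a, w k - wstar⟫ - θ * ⟪a, Δw⟫
        - (σ⁻¹/2) * ‖Δw‖^2 - (τ⁻¹/2) * ‖Δδ‖^2 := by
    linarith only [hm]
  -- bound on the hot gradient difference
  have hna : ‖a‖ ≤ L11 * ‖w k - w (k-1)‖ + L12 * ‖d k - d (k-1)‖ := by
    have h1 := hLww (w k) (w (k-1)) (d k)
    have h2 := hLwd (w (k-1)) (d k) (d (k-1))
    calc ‖a‖ = ‖(Gw (w k) (d k) - Gw (w (k-1)) (d k))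
          + (Gw (w (k-1)) (d k) - Gw (w (k-1)) (d (k-1)))‖ := by rw [ha]; congr 1; abel
      _ ≤ ‖Gw (w k) (d k) - Gw (w (k-1)) (d k)‖
          + ‖Gw (w (k-1)) (d k) - Gw (w (k-1)) (d (k-1))‖ := norm_add_le _ _
      _ ≤ L11 * ‖w k - w (k-1)‖ + L12 * ‖d k - d (k-1)‖ := by gcongr
  have hip : -(‖a‖ * ‖Δw‖) ≤ ⟪a, Δw⟫ := (abs_le.mp (abs_real_inner_le_norm a Δw)).1
  -- AM-GM key bound
  have hkey : ‖a‖ * ‖Δw‖ ≤ (κ*σ⁻¹/2) * ‖w k - w (k-1)‖^2 + (κ*σ⁻¹) * ‖Δw‖^2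
      + (κ*τ⁻¹/2) * ‖d k - d (k-1)‖^2 := by
    set c := ‖Δw‖ with hc
    set c' := ‖w k - w (k-1)‖ with hc'
    set f' := ‖d k - d (k-1)‖ with hf'
    have hcn : 0 ≤ c := norm_nonneg _
    have hcn' : 0 ≤ c' := norm_nonneg _
    have hfn' : 0 ≤ f' := norm_nonneg _
    have h1 : ‖a‖ * c ≤ (L11*c' + L12*f') * c := mul_le_mul_of_nonneg_right hna hcn
    -- piece A, denominators cleared
    have hA' : 2*σ*(L11*c'*c) ≤ κ*c'^2 + κ*c^2 := pieceA' κ σ L11 c c' hL11 hσ hL11σ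
    -- piece B, denominators cleared
    have hB' : 2*σ*τ*(L12*f'*c) ≤ κ*τ*c^2 + κ*σ*f'^2 := pieceB' κ σ τ L12 c f' hL12 hσ hτ hL12s
    have hAdiv : L11*c'*c ≤ (κ*σ⁻¹/2)*c'^2 + (κ*σ⁻¹/2)*c^2 := by
      have h0 : 0 ≤ (κ*c'^2 + κ*c^2 - 2*σ*(L11*c'*c)) / (2*σ) :=
        div_nonneg (by linarith only [hA']) (by positivity)
      have heq : (κ*c'^2 + κ*c^2 - 2*σ*(L11*c'*c)) / (2*σ)
          = (κ*σ⁻¹/2)*c'^2 + (κ*σ⁻¹/2)*c^2 - L11*c'*c := by field_simp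
      linarith only [heq ▸ h0]
    have hBdiv : L12*f'*c ≤ (κ*σ⁻¹/2)*c^2 + (κ*τ⁻¹/2)*f'^2 := by
      have h0 : 0 ≤ (κ*τ*c^2 + κ*σ*f'^2 - 2*σ*τ*(L12*f'*c)) / (2*σ*τ) :=
        div_nonneg (by linarith only [hB']) (by positivity)
      have heq : (κ*τ*c^2 + κ*σ*f'^2 - 2*σ*τ*(L12*f'*c)) / (2*σ*τ)
          = (κ*σ⁻¹/2)*c^2 + (κ*τ⁻¹/2)*f'^2 - L12*f'*c := by field_simp
      linarith only [heq ▸ h0]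
    have hsum : (κ*σ⁻¹/2)*c^2 + (κ*σ⁻¹/2)*c^2 = (κ*σ⁻¹)*c^2 := by field_simp; ring
    linarith only [h1, hAdiv, hBdiv, hsum]
  -- inner product bound, multiplied by θ
  have hinner : -(θ * ⟪a, Δw⟫) ≤ θ*((κ*σ⁻¹/2) * ‖w k - w (k-1)‖^2) + θ*((κ*σ⁻¹) * ‖Δw‖^2)
      + θ*((κ*τ⁻¹/2) * ‖d k - d (k-1)‖^2) := by
    have h2 : -⟪a, Δw⟫ ≤ (κ*σ⁻¹/2) * ‖w k - w (k-1)‖^2 + (κ*σ⁻¹) * ‖Δw‖^2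
        + (κ*τ⁻¹/2) * ‖d k - d (k-1)‖^2 := by linarith only [hip, hkey]
    have := mul_le_mul_of_nonneg_left h2 hθpos.le
    linarith only [this]
  -- contraction coefficient facts
  have hA : (σ⁻¹/2) * ‖w k - wstar‖^2 ≤ θ * ((σ⁻¹/2 + μ/2) * ‖w k - wstar‖^2) := by
    have h0 : 0 ≤ (σ⁻¹/2) * ‖w k - wstar‖^2 := by positivity
    have := mul_le_mul_of_nonneg_left hθσ h0
    have heq : (σ⁻¹/2) * ‖w k - wstar‖^2 * (θ * (1 + μ * σ))
        = θ * ((σ⁻¹/2 + μ/2) * ‖w k - wstar‖^2) := by field_simp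
    linarith only [heq ▸ this]
  have hD : (τ⁻¹/2) * ‖d k - δstar‖^2 ≤ θ * ((τ⁻¹/2 + μ/2) * ‖d k - δstar‖^2) := by
    have h0 : 0 ≤ (τ⁻¹/2) * ‖d k - δstar‖^2 := by positivity
    have := mul_le_mul_of_nonneg_left hθτ h0
    have heq : (τ⁻¹/2) * ‖d k - δstar‖^2 * (θ * (1 + μ * τ))
        = θ * ((τ⁻¹/2 + μ/2) * ‖d k - δstar‖^2) := by field_simp
    linarith only [heq ▸ this]
  have hC : (κ*σ⁻¹/2) * ‖Δw‖^2 + θ*((κ*σ⁻¹) * ‖Δw‖^2) ≤ (σ⁻¹/2) * ‖Δw‖^2 := by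
    have h0 : 0 ≤ (1 - κ*(1+2*θ)) * ‖Δw‖^2 / (2*σ) := by
      apply div_nonneg (mul_nonneg (by linarith) (sq_nonneg _)) (by positivity)
    have heq : (1 - κ*(1+2*θ)) * ‖Δw‖^2 / (2*σ)
        = (σ⁻¹/2) * ‖Δw‖^2 - (κ*σ⁻¹/2) * ‖Δw‖^2 - θ*((κ*σ⁻¹) * ‖Δw‖^2) := by
      field_simp; ring
    linarith only [heq ▸ h0]
  have hF : (κ*τ⁻¹/2) * ‖Δδ‖^2 ≤ (τ⁻¹/2) * ‖Δδ‖^2 := by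
    have h0 : 0 ≤ (1 - κ) * ‖Δδ‖^2 / (2*τ) := by
      apply div_nonneg (mul_nonneg (by linarith) (sq_nonneg _)) (by positivity)
    have heq : (1 - κ) * ‖Δδ‖^2 / (2*τ)
        = (τ⁻¹/2) * ‖Δδ‖^2 - (κ*τ⁻¹/2) * ‖Δδ‖^2 := by field_simp
    linarith only [heq ▸ h0]
  -- flip inner products and norms in the goal
  have hflip1 : ⟪wstar - w (k+1), a'⟫ = -⟪a', w (k+1) - wstar⟫ := by
    have h : (wstar - w (k+1) : E) = -(w (k+1) - wstar) := by abel
    rw [h, inner_neg_left, real_inner_comm]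
  have hflip2 : ⟪wstar - w k, a⟫ = -⟪a, w k - wstar⟫ := by
    have h : (wstar - w k : E) = -(w k - wstar) := by abel
    rw [h, inner_neg_left, real_inner_comm]
  rw [hflip1, hflip2, hc1, hc2, hc3, hc4, norm_sub_rev wstar (w (k+1)), norm_sub_rev δstar (d (k+1)),
    norm_sub_rev wstar (w k), norm_sub_rev δstar (d k)]
  linarith only [h_main, hinner, hA, hD, hC, hF]
end
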